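/- arXiv:2303.17229 — 6 statements merged into one kernel-verified Lean document; each statement's English description precedes it below -/
import Mathlib

section
/- If f : ℝ^d → ℝ is bounded and measurable with ‖f‖_∞ ≤ B, then for every δ > 0, P(|Σ_{i=1}^n f(X_i)a(x,X_i)/d_n(x) − (Σ_{i=1}^n a(x,X_i)/d_n(x))·b_n(f,x)| ≥ δ) ≤ 2·exp(−δ²·d_n(x)/(8B² + 2Bδ/3)). -/
open MeasureTheory ProbabilityTheory Real Filter

/-!
With `g(z, u) = 1{u ≤ k_n(x, z)} (f(z) - b_n(f, x))`, the quantity inside the absolute value is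
`(∑ g(X_i, U_i)) / d_n(x)`, a sum of i.i.d. terms. Integrating out `U` turns the law of `X` on the
edge event into the measure `k_n(x, z) p(z) dz` of mass `c_n(x)`, under which `b_n(f, x)` is the
average of `f`; hence `g` is centred, `|g| ≤ 2B`, and `E g² ≤ B² c_n(x)` (a variance is at most the
second moment). From `(k + 2)! ≥ 6^k / 2` one gets the Bernstein-type bound
`E exp(t g) ≤ exp(2 t² E g² / (1 - |t| 2B / 6))`, and the Chernoff bound on both tails at
`t = 2δ / (8B² + 2Bδ/3)` gives the claim.
-/

lemma six_pow_le_two_mul_factorial_add_two (k : ℕ) : 6 ^ k ≤ 2 * (k + 2).factorial := by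
  induction k with
  | zero => decide
  | succ k ih =>
    rcases Nat.lt_or_ge k 3 with hk | hk
    · interval_cases k <;> decide
    · rw [pow_succ, Nat.factorial_succ]
      nlinarith

lemma Real.exp_le_one_add_add_two_mul_sq_div {y c : ℝ} (hyc : |y| ≤ c) (hc : c < 6) :
    exp y ≤ 1 + y + 2 * y ^ 2 / (1 - c / 6) := by
  have hc0 : 0 ≤ c := (abs_nonneg y).trans hyc
  have hexp : HasSum (fun k : ℕ => y ^ k / k.factorial) (exp y) := by
    rw [Real.exp_eq_exp_ℝ]; exact NormedSpace.expSeries_div_hasSum_exp y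
  have htail : HasSum (fun k : ℕ => y ^ (k + 2) / (k + 2).factorial) (exp y - (1 + y)) := by
    have := (hasSum_nat_add_iff' 2).mpr hexp
    simpa [Finset.sum_range_succ] using this
  have hgeom : HasSum (fun k : ℕ => 2 * y ^ 2 * (c / 6) ^ k) (2 * y ^ 2 * (1 - c / 6)⁻¹) :=
    (hasSum_geometric_of_lt_one (by positivity) (by linarith)).mul_left _
  have hterm : ∀ k : ℕ, y ^ (k + 2) / (k + 2).factorial ≤ 2 * y ^ 2 * (c / 6) ^ k := by
    intro k
    have h6 : (6 : ℝ) ^ k ≤ 2 * (k + 2).factorial := by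
      exact_mod_cast six_pow_le_two_mul_factorial_add_two k
    have hpow : y ^ (k + 2) ≤ y ^ 2 * c ^ k :=
      calc y ^ (k + 2) ≤ |y| ^ (k + 2) := by rw [← abs_pow]; exact le_abs_self _
        _ = y ^ 2 * |y| ^ k := by rw [pow_add, sq_abs, mul_comm]
        _ ≤ y ^ 2 * c ^ k := by gcongr
    calc y ^ (k + 2) / (k + 2).factorial ≤ y ^ 2 * c ^ k * (1 / (k + 2).factorial) := by
          rw [mul_one_div]; gcongr
      _ ≤ y ^ 2 * c ^ k * (2 / 6 ^ k) := by
          refine mul_le_mul_of_nonneg_left ?_ (by positivity)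
          rw [div_le_div_iff₀ (by positivity) (by positivity)]
          linarith
      _ = 2 * y ^ 2 * (c / 6) ^ k := by rw [div_pow]; ring
  have := hasSum_le hterm htail hgeom
  rw [div_eq_mul_inv]
  linarith

lemma mgf_le_exp_of_abs_le {α : Type*} [MeasurableSpace α] {ν : Measure α}
    [IsProbabilityMeasure ν] {w : α → ℝ} {M V t : ℝ} (hw : AEMeasurable w ν)
    (hwM : ∀ᵐ a ∂ν, |w a| ≤ M) (hmean : ∫ a, w a ∂ν = 0) (hvar : ∫ a, w a ^ 2 ∂ν ≤ V)
    (htM : |t| * M < 6) :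
    mgf w ν t ≤ exp (2 * t ^ 2 * V / (1 - |t| * M / 6)) := by
  set D := 1 - |t| * M / 6
  have hD : 0 < D := by simp only [D]; linarith
  have hint : Integrable w ν := .of_bound hw.aestronglyMeasurable M (by simpa using hwM)
  have hint_sq : Integrable (fun a => w a ^ 2) ν :=
    .of_bound (hw.pow_const 2).aestronglyMeasurable (M ^ 2) <| by
      filter_upwards [hwM] with a ha
      simpa [sq_abs] using pow_le_pow_left₀ (abs_nonneg _) ha 2
  have hpointwise : ∀ᵐ a ∂ν, exp (t * w a) ≤ 1 + t * w a + 2 * t ^ 2 / D * w a ^ 2 := by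
    filter_upwards [hwM] with a ha
    have := Real.exp_le_one_add_add_two_mul_sq_div (y := t * w a) (c := |t| * M)
      (by rw [abs_mul]; gcongr) htM
    convert this using 1; ring
  calc mgf w ν t ≤ ∫ a, 1 + t * w a + 2 * t ^ 2 / D * w a ^ 2 ∂ν :=
        integral_mono_ae (integrable_exp_mul_of_mem_Icc (a := -M) (b := M) hw
          (by filter_upwards [hwM] with a ha using abs_le.mp ha))
          (((integrable_const 1).add (hint.const_mul t)).add (hint_sq.const_mul _)) hpointwise
    _ = 1 + 2 * t ^ 2 / D * ∫ a, w a ^ 2 ∂ν := by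
        have hint_affine : Integrable (fun a => 1 + t * w a) ν :=
          (integrable_const 1).add (hint.const_mul t)
        rw [integral_add hint_affine (hint_sq.const_mul _),
          integral_add (integrable_const 1) (hint.const_mul t), integral_const_mul,
          integral_const_mul, hmean]
        simp
    _ ≤ 1 + 2 * t ^ 2 / D * V := by gcongr
    _ = 1 + 2 * t ^ 2 * V / D := by ring
    _ ≤ exp (2 * t ^ 2 * V / D) := by linarith [add_one_le_exp (2 * t ^ 2 * V / D)]

section IID

variable {Ω β ι : Type*} [MeasurableSpace Ω] [MeasurableSpace β] [Fintype ι]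
  {P : Measure Ω} {ν : Measure β} {Y : ι → Ω → β}

lemma mgf_sum_comp_eq_pow [SigmaFinite ν] (hY : AEMeasurable (fun ω i => Y i ω) P)
    (hlaw : P.map (fun ω i => Y i ω) = Measure.pi fun _ => ν) {g : β → ℝ} (hg : Measurable g)
    (t : ℝ) : mgf (fun ω => ∑ i, g (Y i ω)) P t = mgf g ν t ^ Fintype.card ι := by
  have hG : Measurable fun v : ι → β => exp (t * ∑ i, g (v i)) := by fun_prop
  calc mgf (fun ω => ∑ i, g (Y i ω)) P t
        = ∫ v, exp (t * ∑ i, g (v i)) ∂(Measure.pi fun _ => ν) := by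
        rw [← hlaw, integral_map hY hG.aestronglyMeasurable]; rfl
    _ = ∫ v : ι → β, ∏ i, exp (t * g (v i)) ∂(Measure.pi fun _ => ν) := by
        simp_rw [Finset.mul_sum, Real.exp_sum]
    _ = mgf g ν t ^ Fintype.card ι := integral_fintype_prod_eq_pow (fun b => exp (t * g b))

lemma measureReal_abs_ge_le_exp_mul_mgf_add [IsFiniteMeasure P] {S : Ω → ℝ} {ε l : ℝ}
    (hl : 0 ≤ l) (hpos : Integrable (fun ω => exp (l * S ω)) P)
    (hneg : Integrable (fun ω => exp (-l * S ω)) P) :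
    P.real {ω | ε ≤ |S ω|} ≤ exp (-l * ε) * (mgf S P l + mgf S P (-l)) := by
  have hsub : {ω | ε ≤ |S ω|} ⊆ {ω | ε ≤ S ω} ∪ {ω | S ω ≤ -ε} := fun ω (hω : ε ≤ |S ω|) =>
    (le_abs'.mp hω).symm
  calc P.real {ω | ε ≤ |S ω|} ≤ P.real {ω | ε ≤ S ω} + P.real {ω | S ω ≤ -ε} :=
        (measureReal_mono hsub).trans (measureReal_union_le _ _)
    _ ≤ exp (-l * ε) * mgf S P l + exp (-(-l) * -ε) * mgf S P (-l) :=
        add_le_add (measure_ge_le_exp_mul_mgf ε hl hpos)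
          (measure_le_le_exp_mul_mgf (-ε) (neg_nonpos.mpr hl) hneg)
    _ = exp (-l * ε) * (mgf S P l + mgf S P (-l)) := by ring_nf

theorem measureReal_abs_sum_ge_le [IsProbabilityMeasure P] [IsProbabilityMeasure ν]
    (hY : AEMeasurable (fun ω i => Y i ω) P)
    (hlaw : P.map (fun ω i => Y i ω) = Measure.pi fun _ => ν) {g : β → ℝ} (hg : Measurable g)
    {M V ε l : ℝ} (hgM : ∀ b, |g b| ≤ M) (hmean : ∫ b, g b ∂ν = 0)
    (hvar : ∫ b, g b ^ 2 ∂ν ≤ V) (hl : 0 ≤ l) (hlM : l * M < 6) :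
    P.real {ω | ε ≤ |∑ i, g (Y i ω)|}
      ≤ 2 * exp (-l * ε + Fintype.card ι * (2 * l ^ 2 * V / (1 - l * M / 6))) := by
  set S := fun ω => ∑ i, g (Y i ω)
  have hS : AEMeasurable S P :=
    (Finset.measurable_sum _ fun i _ => hg.comp (measurable_pi_apply i)).comp_aemeasurable hY
  have hSM : ∀ᵐ ω ∂P, S ω ∈ Set.Icc (-(Fintype.card ι * M)) (Fintype.card ι * M) :=
    ae_of_all _ fun ω => abs_le.mp <| (Finset.abs_sum_le_sum_abs _ _).trans <| by
      simpa using Finset.sum_le_sum fun i (_ : i ∈ Finset.univ) => hgM (Y i ω)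
  have hmgf : ∀ s, |s| = l →
      mgf S P s ≤ exp (Fintype.card ι * (2 * l ^ 2 * V / (1 - l * M / 6))) := by
    intro s hs
    rw [mgf_sum_comp_eq_pow hY hlaw hg, Real.exp_nat_mul]
    have := mgf_le_exp_of_abs_le hg.aemeasurable (ae_of_all _ hgM) hmean hvar
      (t := s) (by rwa [hs])
    rw [hs, ← sq_abs, hs] at this
    gcongr
    exact mgf_nonneg
  calc P.real {ω | ε ≤ |S ω|} ≤ exp (-l * ε) * (mgf S P l + mgf S P (-l)) :=
        measureReal_abs_ge_le_exp_mul_mgf_add hl (integrable_exp_mul_of_mem_Icc hS hSM)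
          (integrable_exp_mul_of_mem_Icc hS hSM)
    _ ≤ exp (-l * ε) * (exp (Fintype.card ι * (2 * l ^ 2 * V / (1 - l * M / 6)))
          + exp (Fintype.card ι * (2 * l ^ 2 * V / (1 - l * M / 6)))) := by
        gcongr
        exacts [hmgf l (abs_of_nonneg hl), hmgf (-l) (by rw [abs_neg, abs_of_nonneg hl])]
    _ = _ := by rw [exp_add]; ring

end IID

section Average

variable {α : Type*} [MeasurableSpace α] {ρ : Measure α} [IsFiniteMeasure ρ] {f : α → ℝ} {B : ℝ}

lemma abs_average_le_of_abs_le [Nonempty α] (hf : AEStronglyMeasurable f ρ)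
    (hfB : ∀ z, |f z| ≤ B) : |⨍ z, f z ∂ρ| ≤ B := by
  rcases eq_or_ne ρ 0 with rfl | hρ
  · simpa using (abs_nonneg _).trans (hfB (Classical.arbitrary α))
  have hint : Integrable f ρ := .of_bound hf B (ae_of_all _ hfB)
  obtain ⟨z₁, hz₁⟩ := exists_le_average hρ hint
  obtain ⟨z₂, hz₂⟩ := exists_average_le hρ hint
  exact abs_le.mpr
    ⟨by linarith [neg_abs_le (f z₁), hfB z₁], by linarith [le_abs_self (f z₂), hfB z₂]⟩

lemma integral_sub_average_sq_le (hf : AEStronglyMeasurable f ρ) (hfB : ∀ z, |f z| ≤ B) :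
    ∫ z, (f z - ⨍ z, f z ∂ρ) ^ 2 ∂ρ ≤ B ^ 2 * ρ.real Set.univ := by
  set m := ⨍ z, f z ∂ρ
  have hint : Integrable f ρ := .of_bound hf B (ae_of_all _ hfB)
  have hint_sq : Integrable (fun z => f z ^ 2) ρ :=
    .of_bound (hf.pow 2) (B ^ 2) (ae_of_all _ fun z => by
      simpa [sq_abs] using pow_le_pow_left₀ (abs_nonneg _) (hfB z) 2)
  have hmean : ∫ z, f z ∂ρ = ρ.real Set.univ * m := (measure_smul_average ρ f).symm
  calc ∫ z, (f z - m) ^ 2 ∂ρ = ∫ z, f z ^ 2 - 2 * m * f z + m ^ 2 ∂ρ := by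
        congr 1 with z; ring
    _ = ∫ z, f z ^ 2 ∂ρ - ρ.real Set.univ * m ^ 2 := by
        have hint_quad : Integrable (fun z => f z ^ 2 - 2 * m * f z) ρ :=
          hint_sq.sub (hint.const_mul _)
        rw [integral_add hint_quad (integrable_const _),
          integral_sub hint_sq (hint.const_mul _), integral_const_mul, hmean, integral_const,
          smul_eq_mul]
        ring
    _ ≤ ∫ z, B ^ 2 ∂ρ := by
        have := integral_mono hint_sq (integrable_const (B ^ 2)) fun z =>
          (sq_abs (f z)).symm.trans_le (pow_le_pow_left₀ (abs_nonneg _) (hfB z) 2)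
        nlinarith [measureReal_nonneg (μ := ρ) (s := Set.univ), sq_nonneg m]
    _ = B ^ 2 * ρ.real Set.univ := by rw [integral_const, smul_eq_mul, mul_comm]

end Average

section CenteredIndicator

variable {α : Type*} [MeasurableSpace α] {ν : Measure α} [IsFiniteMeasure ν] {s : Set α}
  {F : α → ℝ} {B : ℝ}

lemma integral_indicator_sub_setAverage_eq_zero (hs : MeasurableSet s) :
    ∫ q, s.indicator (fun q => F q - ⨍ q in s, F q ∂ν) q ∂ν = 0 := by
  rw [integral_indicator hs, setAverage_sub_setAverage (measure_ne_top _ _)]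

lemma integral_indicator_sub_setAverage_sq_le (hs : MeasurableSet s)
    (hF : AEStronglyMeasurable F (ν.restrict s)) (hFB : ∀ q, |F q| ≤ B) :
    ∫ q, s.indicator (fun q => F q - ⨍ q in s, F q ∂ν) q ^ 2 ∂ν ≤ B ^ 2 * ν.real s := by
  have hsq := Set.indicator_comp_of_zero (s := s) (g := fun y : ℝ => y ^ 2)
    (f := fun q => F q - ⨍ q in s, F q ∂ν) (by simp)
  simp only [Function.comp_def] at hsq
  simp_rw [← hsq, integral_indicator hs]
  rw [← measureReal_restrict_apply_univ]
  exact integral_sub_average_sq_le hF hFB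

lemma abs_indicator_sub_setAverage_le [Nonempty α] (hF : AEStronglyMeasurable F (ν.restrict s))
    (hFB : ∀ q, |F q| ≤ B) (q : α) :
    |s.indicator (fun q => F q - ⨍ q in s, F q ∂ν) q| ≤ 2 * B := by
  by_cases hq : q ∈ s
  · rw [Set.indicator_of_mem hq]
    linarith [abs_sub (F q) (⨍ q in s, F q ∂ν), hFB q, abs_average_le_of_abs_le hF hFB]
  · rw [Set.indicator_of_notMem hq, abs_zero]
    linarith [(abs_nonneg _).trans (hFB q)]

end CenteredIndicator

lemma map_fst_restrict_prod_uniform {E : Type*} [MeasurableSpace E] (μ : Measure E) [SFinite μ]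
    {κ : E → ℝ} (hκ : Measurable κ) (hκ01 : ∀ z, κ z ∈ Set.Icc 0 1) :
    ((μ.prod (volume.restrict (Set.Icc (0 : ℝ) 1))).restrict {q | q.2 ≤ κ q.1}).map Prod.fst
      = μ.withDensity fun z => ENNReal.ofReal (κ z) := by
  have hs : MeasurableSet {q : E × ℝ | q.2 ≤ κ q.1} :=
    measurableSet_le measurable_snd (hκ.comp measurable_fst)
  ext A hA
  rw [Measure.map_apply measurable_fst hA, Measure.restrict_apply (measurable_fst hA),
    Measure.prod_apply ((measurable_fst hA).inter hs), withDensity_apply _ hA,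
    ← lintegral_indicator hA]
  congr 1 with z
  by_cases hz : z ∈ A
  · have : Prod.mk z ⁻¹' (Prod.fst ⁻¹' A ∩ {q | q.2 ≤ κ q.1}) = Set.Iic (κ z) := by
      ext u; simp [hz]
    have hIcc : Set.Iic (κ z) ∩ Set.Icc 0 1 = Set.Icc 0 (κ z) := Set.ext fun u =>
      ⟨fun ⟨h₁, h₂, _⟩ => ⟨h₂, h₁⟩, fun ⟨h₁, h₂⟩ => ⟨h₂, h₁, h₂.trans (hκ01 z).2⟩⟩
    rw [this, Set.indicator_of_mem hz, Measure.restrict_apply measurableSet_Iic, hIcc,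
      Real.volume_Icc, sub_zero]
  · have : Prod.mk z ⁻¹' (Prod.fst ⁻¹' A ∩ {q | q.2 ≤ κ q.1}) = ∅ := by
      ext u; simp [hz]
    rw [this, Set.indicator_of_notMem hz, measure_empty]

lemma integral_withDensity_ofReal {α : Type*} [MeasurableSpace α] {μ : Measure α} {h : α → ℝ}
    (hh : Measurable h) (h0 : ∀ x, 0 ≤ h x) (φ : α → ℝ) :
    ∫ x, φ x ∂μ.withDensity (fun x => ENNReal.ofReal (h x)) = ∫ x, h x * φ x ∂μ := by
  rw [integral_withDensity_eq_integral_toReal_smul hh.ennreal_ofReal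
    (ae_of_all _ fun _ => ENNReal.ofReal_lt_top)]
  simp [ENNReal.toReal_ofReal (h0 _)]

lemma setIntegral_prod_uniform_edge {E : Type*} [MeasureSpace E] [SFinite (volume : Measure E)]
    {p κ φ : E → ℝ} (hp : Measurable p) (hp0 : ∀ z, 0 ≤ p z) (hκ : Measurable κ)
    (hκ01 : ∀ z, κ z ∈ Set.Icc 0 1) (hφ : Measurable φ) :
    ∫ q in {q : E × ℝ | q.2 ≤ κ q.1}, φ q.1
        ∂((volume.withDensity fun z => ENNReal.ofReal (p z)).prod
          (volume.restrict (Set.Icc (0 : ℝ) 1)))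
      = ∫ z, φ z * (κ z * p z) := by
  rw [← integral_map measurable_fst.aemeasurable hφ.aestronglyMeasurable,
    map_fst_restrict_prod_uniform _ hκ hκ01, integral_withDensity_ofReal hκ fun z => (hκ01 z).1,
    integral_withDensity_ofReal hp hp0]
  congr 1 with z
  ring

lemma mul_le_abs_of_le_abs_div {a b c : ℝ} (hc : 0 ≤ c) (h : a ≤ |b / c|) : a * c ≤ |b| := by
  rcases hc.eq_or_lt with rfl | hc
  · simp
  · rwa [abs_div, abs_of_pos hc, le_div_iff₀ hc] at h

/- `l = 2δ / (8B² + 2Bδ/3)` is the Chernoff parameter at which the exponent of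
`measureReal_abs_sum_ge_le`, with `M = 2B`, `V = B² c` and `ε = δ n c`, equals the claimed one. -/
lemma chernoff_parameter_mul_lt_six {B δ : ℝ} (hB : 0 ≤ B) (hδ : 0 < δ) :
    2 * δ / (8 * B ^ 2 + 2 * B * δ / 3) * (2 * B) < 6 := by
  rcases hB.eq_or_lt with rfl | hB
  · norm_num
  rw [div_mul_eq_mul_div, div_lt_iff₀ (by positivity)]
  nlinarith [mul_pos hB hB]

lemma chernoff_exponent_eq {B δ c : ℝ} (n : ℕ) (hB : 0 ≤ B) (hδ : 0 < δ) :
    -(2 * δ / (8 * B ^ 2 + 2 * B * δ / 3)) * (δ * (n * c))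
      + n * (2 * (2 * δ / (8 * B ^ 2 + 2 * B * δ / 3)) ^ 2 * (B ^ 2 * c)
        / (1 - 2 * δ / (8 * B ^ 2 + 2 * B * δ / 3) * (2 * B) / 6))
      = -(δ ^ 2 * (n * c)) / (8 * B ^ 2 + 2 * B * δ / 3) := by
  rcases hB.eq_or_lt with rfl | hB
  · simp
  have hD : 0 < 8 * B ^ 2 + 2 * B * δ / 3 := by positivity
  have hden : 1 - 2 * δ / (8 * B ^ 2 + 2 * B * δ / 3) * (2 * B) / 6
      = 8 * B ^ 2 / (8 * B ^ 2 + 2 * B * δ / 3) := by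
    field_simp; ring
  rw [hden]
  field_simp
  ring

theorem stmt_1_general
    {n d : ℕ} {Ω : Type} [MeasurableSpace Ω]
    (P : Measure Ω) [IsProbabilityMeasure P]
    (X : Fin n → Ω → EuclideanSpace ℝ (Fin d)) (U : Fin n → Ω → ℝ)
    (hX : ∀ i, Measurable (X i)) (hU : ∀ i, Measurable (U i))
    (p : EuclideanSpace ℝ (Fin d) → ℝ)
    (hp0 : ∀ z, 0 ≤ p z) (hpm : Measurable p)
    (kn : EuclideanSpace ℝ (Fin d) → EuclideanSpace ℝ (Fin d) → ℝ)
    (hk01 : ∀ u v, kn u v ∈ Set.Icc (0 : ℝ) 1)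
    (hkm : Measurable (Function.uncurry kn))
    (x : EuclideanSpace ℝ (Fin d))
    (μX : Measure (EuclideanSpace ℝ (Fin d))) (hμXP : IsProbabilityMeasure μX)
    (hμX : μX = volume.withDensity fun z => ENNReal.ofReal (p z))
    (μU : Measure ℝ) (hμUP : IsProbabilityMeasure μU)
    (hμU : μU = volume.restrict (Set.Icc (0 : ℝ) 1))
    (hlaw : Measure.map (fun ω => fun i : Fin n => (X i ω, U i ω)) P
      = Measure.pi fun _ : Fin n => μX.prod μU)
    (A : Fin n → Ω → ℝ)
    (hA : ∀ i ω, A i ω = if U i ω ≤ kn x (X i ω) then 1 else 0)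
    (cnx dnx : ℝ)
    (hc : cnx = ∫ z, kn x z * p z)
    (hd : dnx = n * cnx)
    (f : EuclideanSpace ℝ (Fin d) → ℝ) (B : ℝ)
    (hfm : Measurable f) (hfB : ∀ z, |f z| ≤ B)
    (Tfx bnfx : ℝ)
    (hT : Tfx = ∫ z, f z * (kn x z * p z)) (hb : bnfx = Tfx / cnx)
    :
    ∀ δ : ℝ, 0 < δ →
      (P {ω | δ ≤ |(∑ i, f (X i ω) * A i ω) / dnx - ((∑ i, A i ω) / dnx) * bnfx|}).toReal
        ≤ 2 * Real.exp (-(δ ^ 2 * dnx) / (8 * B ^ 2 + 2 * B * δ / 3)) := by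
  intro δ hδ
  subst hμX hμU
  have hB : 0 ≤ B := (abs_nonneg _).trans (hfB x)
  have hκ : Measurable (kn x) := hkm.comp measurable_prodMk_left
  set s := {q : EuclideanSpace ℝ (Fin d) × ℝ | q.2 ≤ kn x q.1}
  have hs : MeasurableSet s := measurableSet_le measurable_snd (hκ.comp measurable_fst)
  set ν := (volume.withDensity fun z => ENNReal.ofReal (p z)).prod
    (volume.restrict (Set.Icc (0 : ℝ) 1))
  have hcnx : cnx = ν.real s := by
    simpa [hc] using (setIntegral_prod_uniform_edge hpm hp0 hκ (hk01 x) measurable_one).symm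
  have hbnfx : bnfx = ⨍ q in s, f q.1 ∂ν := by
    rw [setAverage_eq, setIntegral_prod_uniform_edge hpm hp0 hκ (hk01 x) hfm, ← hT, ← hcnx, hb,
      smul_eq_mul, div_eq_inv_mul]
  set g := s.indicator fun q => f q.1 - bnfx
  have hF : AEStronglyMeasurable (fun q : EuclideanSpace ℝ (Fin d) × ℝ => f q.1) (ν.restrict s) :=
    (hfm.comp measurable_fst).aestronglyMeasurable
  have hevent : {ω | δ ≤ |(∑ i, f (X i ω) * A i ω) / dnx - ((∑ i, A i ω) / dnx) * bnfx|}
      ⊆ {ω | δ * dnx ≤ |∑ i, g (X i ω, U i ω)|} := fun ω (hω : δ ≤ _) => by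
    have hg : ∀ i, g (X i ω, U i ω) = f (X i ω) * A i ω - A i ω * bnfx := fun i => by
      by_cases h : U i ω ≤ kn x (X i ω) <;> simp [g, s, hA, h]
    refine mul_le_abs_of_le_abs_div (by rw [hd, hcnx]; positivity) ?_
    simpa only [hg, Finset.sum_sub_distrib, ← Finset.sum_mul, sub_div, div_mul_eq_mul_div] using hω
  rw [← measureReal_def]
  calc _ ≤ _ := measureReal_mono hevent
    _ ≤ _ := measureReal_abs_sum_ge_le (Y := fun i ω => (X i ω, U i ω))
        (l := 2 * δ / (8 * B ^ 2 + 2 * B * δ / 3)) (V := B ^ 2 * cnx)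
        (measurable_pi_lambda _ fun i => (hX i).prodMk (hU i)).aemeasurable hlaw
        (((hfm.comp measurable_fst).sub_const _).indicator hs)
        (hbnfx ▸ abs_indicator_sub_setAverage_le hF fun q => hfB q.1)
        (hbnfx ▸ integral_indicator_sub_setAverage_eq_zero hs)
        (hbnfx ▸ hcnx ▸ integral_indicator_sub_setAverage_sq_le hs hF fun q => hfB q.1)
        (by positivity) (chernoff_parameter_mul_lt_six hB hδ)
    _ = _ := by rw [Fintype.card_fin, hd, chernoff_exponent_eq n hB hδ]

/-- Concentration of the (noise-free) numerator of the GNW estimator: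
for bounded `f` with `‖f‖_∞ ≤ B` and every `δ > 0`,
`P(|∑ f(X_i) a(x,X_i)/d_n(x) − (∑ a(x,X_i)/d_n(x)) b_n(f,x)| ≥ δ)
  ≤ 2 exp(−δ² d_n(x)/(8B² + 2Bδ/3))`. -/
theorem stmt_1
    {n d : ℕ} {Ω : Type} [MeasurableSpace Ω]
    (P : Measure Ω) [IsProbabilityMeasure P]
    (X : Fin n → Ω → EuclideanSpace ℝ (Fin d)) (U : Fin n → Ω → ℝ)
    (hX : ∀ i, Measurable (X i)) (hU : ∀ i, Measurable (U i))
    (p : EuclideanSpace ℝ (Fin d) → ℝ)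
    (hp0 : ∀ z, 0 ≤ p z) (hpm : Measurable p) (hp1 : ∫ z, p z = 1)
    (kn : EuclideanSpace ℝ (Fin d) → EuclideanSpace ℝ (Fin d) → ℝ)
    (hk01 : ∀ u v, kn u v ∈ Set.Icc (0 : ℝ) 1)
    (hkm : Measurable (Function.uncurry kn))
    (x : EuclideanSpace ℝ (Fin d))
    (μX : Measure (EuclideanSpace ℝ (Fin d))) (hμXP : IsProbabilityMeasure μX)
    (hμX : μX = volume.withDensity fun z => ENNReal.ofReal (p z))
    (μU : Measure ℝ) (hμUP : IsProbabilityMeasure μU)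
    (hμU : μU = volume.restrict (Set.Icc (0 : ℝ) 1))
    (hlaw : Measure.map (fun ω => fun i : Fin n => (X i ω, U i ω)) P
      = Measure.pi fun _ : Fin n => μX.prod μU)
    (A : Fin n → Ω → ℝ)
    (hA : ∀ i ω, A i ω = if U i ω ≤ kn x (X i ω) then 1 else 0)
    (cnx dnx : ℝ)
    (hc : cnx = ∫ z, kn x z * p z) (hcpos : 0 < cnx)
    (hd : dnx = n * cnx)
    (f : EuclideanSpace ℝ (Fin d) → ℝ) (B : ℝ)
    (hfm : Measurable f) (hfB : ∀ z, |f z| ≤ B)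
    (Tfx bnfx : ℝ)
    (hT : Tfx = ∫ z, f z * (kn x z * p z)) (hb : bnfx = Tfx / cnx)
    :
    ∀ δ : ℝ, 0 < δ →
      (P {ω | δ ≤ |(∑ i, f (X i ω) * A i ω) / dnx - ((∑ i, A i ω) / dnx) * bnfx|}).toReal
        ≤ 2 * Real.exp (-(δ ^ 2 * dnx) / (8 * B ^ 2 + 2 * B * δ / 3)) :=
  stmt_1_general P X U hX hU p hp0 hpm kn hk01 hkm x μX hμXP hμX μU hμUP hμU hlaw A hA cnx dnx hc hd
    f B hfm hfB Tfx bnfx hT hb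
end

section
/- (Decoupling trick) For all pairs of disjoint subsets I, J ⊆ {1,…,n}, one has R_J(x)·∏_{i∈I} a(x,X_i) = R_{I∪J}(x)·∏_{i∈I} a(x,X_i) almost surely, and the random variable R_{I∪J}(x) is independent of the family {a(x,X_i) : i ∈ I}. -/
/-!
The edge indicators `a(x, X_i)` are functions of the independent pairs `(X_i, U_i)`, hence
independent. `R_K(x) = (|K| + Σ_{j ∉ K} a(x, X_j))⁻¹` only involves the indicators outside `K`, so
for `I ⊆ K` it is independent of those indexed by `I`. On the event `∏_{i ∈ I} a(x, X_i) ≠ 0` all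
edges to `I` are present, and forcing them (passing from `J` to `I ∪ J`) changes nothing.
-/

open MeasureTheory ProbabilityTheory Real Filter

theorem ProbabilityTheory.iIndepFun_of_map_eq_pi {Ω ι : Type*} [MeasurableSpace Ω] [Fintype ι]
    {β : ι → Type*} [∀ i, MeasurableSpace (β i)] {μ : Measure Ω} [IsProbabilityMeasure μ]
    {ν : ∀ i, Measure (β i)} [∀ i, IsProbabilityMeasure (ν i)] {Y : ∀ i, Ω → β i}
    (hY : ∀ i, Measurable (Y i)) (hlaw : μ.map (fun ω i ↦ Y i ω) = Measure.pi ν) :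
    iIndepFun Y μ := by
  rw [iIndepFun_iff_map_fun_eq_pi_map fun i ↦ (hY i).aemeasurable, hlaw]
  congr 1
  funext i
  rw [← (measurePreserving_eval ν i).map_eq, ← hlaw, Measure.map_map (measurable_pi_apply i)
    (measurable_pi_lambda _ hY)]
  rfl

section InvDegree

open Finset

variable {ι : Type*} [Fintype ι] [DecidableEq ι]

/-- The paper's `R_K(x)` as a function of the edge indicators `a i = a(x, X_i)`: the inverse
degree of `x` once the edges to `K` are forced to be present. -/
noncomputable def invDegree (K : Finset ι) (a : ι → ℝ) : ℝ :=
  if K.Nonempty then 1 / (#K + ∑ j ∈ Kᶜ, a j)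
  else if 0 < ∑ i, a i then 1 / ∑ i, a i else 0

-- For `K = ∅` the case split of the definition is absorbed by the convention `0⁻¹ = 0`.
theorem invDegree_eq_inv_card_add_sum {a : ι → ℝ} (ha : ∀ i, 0 ≤ a i) (K : Finset ι) :
    invDegree K a = (#K + ∑ j ∈ Kᶜ, a j)⁻¹ := by
  rcases K.eq_empty_or_nonempty with rfl | hK
  · have hsum : 0 ≤ ∑ i, a i := sum_nonneg fun i _ ↦ ha i
    simp only [invDegree, Finset.not_nonempty_empty, if_false, card_empty, CharP.cast_eq_zero,
      zero_add, compl_empty, one_div]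
    split_ifs with hpos
    · rfl
    · rw [le_antisymm (not_lt.mp hpos) hsum, inv_zero]
  · simp [invDegree, hK]

theorem invDegree_union_of_eq_one {I J : Finset ι} (hIJ : Disjoint I J) {a : ι → ℝ}
    (ha : ∀ i, 0 ≤ a i) (h1 : ∀ i ∈ I, a i = 1) : invDegree (I ∪ J) a = invDegree J a := by
  have hsplit : ∑ j ∈ Jᶜ, a j = #I + ∑ j ∈ (I ∪ J)ᶜ, a j := by
    rw [← sum_sdiff (subset_compl_iff_disjoint_right.mpr hIJ), sum_congr rfl h1, sum_const,
      nsmul_one, add_comm, compl_union, sdiff_eq_inter_compl, inter_comm]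
  rw [invDegree_eq_inv_card_add_sum ha, invDegree_eq_inv_card_add_sum ha, hsplit,
    card_union_of_disjoint hIJ, Nat.cast_add]
  ring

theorem invDegree_mul_prod_eq {I J : Finset ι} (hIJ : Disjoint I J) {a : ι → ℝ}
    (ha : ∀ i, a i = 0 ∨ a i = 1) :
    invDegree J a * ∏ i ∈ I, a i = invDegree (I ∪ J) a * ∏ i ∈ I, a i := by
  by_cases h0 : ∃ i ∈ I, a i = 0
  · rw [prod_eq_zero_iff.mpr h0, mul_zero, mul_zero]
  · push Not at h0
    have hnonneg : ∀ i, 0 ≤ a i := fun i ↦ by rcases ha i with h | h <;> simp [h]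
    rw [invDegree_union_of_eq_one hIJ hnonneg fun i hi ↦ (ha i).resolve_left (h0 i hi)]

theorem indepFun_invDegree {Ω : Type*} [MeasurableSpace Ω] {μ : Measure Ω}
    {A : ι → Ω → ℝ} (hA : iIndepFun A μ) (hAm : ∀ i, Measurable (A i))
    (hA0 : ∀ i ω, 0 ≤ A i ω) {I K : Finset ι} (hIK : I ⊆ K) :
    IndepFun (fun ω ↦ invDegree K (A · ω)) (fun ω (i : I) ↦ A i ω) μ := by
  have hrestrict : (fun ω ↦ invDegree K (A · ω)) =
      (fun y : (Kᶜ : Finset ι) → ℝ ↦ ((#K : ℝ) + ∑ j, y j)⁻¹) ∘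
        fun ω (j : (Kᶜ : Finset ι)) ↦ A j ω := by
    funext ω
    rw [invDegree_eq_inv_card_add_sum (hA0 · ω), Function.comp_apply,
      sum_coe_sort Kᶜ fun j ↦ A j ω]
  rw [hrestrict]
  exact (hA.indepFun_finset Kᶜ I (disjoint_compl_left.mono_right hIK) hAm).comp
    (by fun_prop) measurable_id

end InvDegree

theorem stmt_4_general
    {n d : ℕ} {Ω : Type} [MeasurableSpace Ω]
    (P : Measure Ω) [IsProbabilityMeasure P]
    (X : Fin n → Ω → EuclideanSpace ℝ (Fin d)) (U : Fin n → Ω → ℝ)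
    (hX : ∀ i, Measurable (X i)) (hU : ∀ i, Measurable (U i))
    (kn : EuclideanSpace ℝ (Fin d) → EuclideanSpace ℝ (Fin d) → ℝ)
    (hkm : Measurable (Function.uncurry kn))
    (x : EuclideanSpace ℝ (Fin d))
    (μX : Measure (EuclideanSpace ℝ (Fin d))) (hμXP : IsProbabilityMeasure μX)
    (μU : Measure ℝ) (hμUP : IsProbabilityMeasure μU)
    (hlaw : Measure.map (fun ω => fun i : Fin n => (X i ω, U i ω)) P
      = Measure.pi fun _ : Fin n => μX.prod μU)
    (A : Fin n → Ω → ℝ)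
    (hA : ∀ i ω, A i ω = if U i ω ≤ kn x (X i ω) then 1 else 0)
    (R : Finset (Fin n) → Ω → ℝ)
    (hR : ∀ (I : Finset (Fin n)) (ω : Ω), R I ω =
      if I.Nonempty then 1 / (I.card + ∑ j ∈ Iᶜ, A j ω)
      else if 0 < ∑ i, A i ω then 1 / (∑ i, A i ω) else 0) :
    ∀ I J : Finset (Fin n), Disjoint I J →
      (∀ᵐ ω ∂P, R J ω * ∏ i ∈ I, A i ω = R (I ∪ J) ω * ∏ i ∈ I, A i ω) ∧
      IndepFun (R (I ∪ J)) (fun ω (i : I) => A i.1 ω) P := by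
  intro I J hIJ
  let edge : EuclideanSpace ℝ (Fin d) × ℝ → ℝ := fun q ↦ if q.2 ≤ kn x q.1 then 1 else 0
  have hedge : Measurable edge :=
    Measurable.ite
      (measurableSet_le measurable_snd (hkm.comp (measurable_const.prodMk measurable_fst)))
      measurable_const measurable_const
  have hAedge : A = fun i ω ↦ edge (X i ω, U i ω) := funext₂ hA
  have hAm : ∀ i, Measurable (A i) := fun i ↦ hAedge ▸ hedge.comp ((hX i).prodMk (hU i))
  have hAind : iIndepFun A P := hAedge ▸
    (iIndepFun_of_map_eq_pi (fun i ↦ (hX i).prodMk (hU i)) hlaw).comp _ fun _ ↦ hedge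
  have hA01 : ∀ i ω, A i ω = 0 ∨ A i ω = 1 := fun i ω ↦ by rw [hA]; split_ifs <;> simp
  have hA0 : ∀ i ω, 0 ≤ A i ω := fun i ω ↦ by rw [hA]; split_ifs <;> norm_num
  have hRA : R = fun K ω ↦ invDegree K (A · ω) := funext₂ hR
  subst hRA
  exact ⟨ae_of_all _ fun ω ↦ invDegree_mul_prod_eq hIJ (hA01 · ω),
    indepFun_invDegree hAind hAm hA0 Finset.subset_union_left⟩

/-- (Decoupling trick.) For all disjoint `I, J ⊆ {1,…,n}`,
`R_J(x) ∏_{i∈I} a(x,X_i) = R_{I∪J}(x) ∏_{i∈I} a(x,X_i)` almost surely, and `R_{I∪J}(x)`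
is independent of the family `{a(x,X_i) : i ∈ I}`. -/
theorem stmt_4
    {n d : ℕ} {Ω : Type} [MeasurableSpace Ω]
    (P : Measure Ω) [IsProbabilityMeasure P]
    (X : Fin n → Ω → EuclideanSpace ℝ (Fin d)) (U : Fin n → Ω → ℝ)
    (hX : ∀ i, Measurable (X i)) (hU : ∀ i, Measurable (U i))
    (p : EuclideanSpace ℝ (Fin d) → ℝ)
    (hp0 : ∀ z, 0 ≤ p z) (hpm : Measurable p) (hp1 : ∫ z, p z = 1)
    (kn : EuclideanSpace ℝ (Fin d) → EuclideanSpace ℝ (Fin d) → ℝ)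
    (hk01 : ∀ u v, kn u v ∈ Set.Icc (0 : ℝ) 1)
    (hkm : Measurable (Function.uncurry kn))
    (x : EuclideanSpace ℝ (Fin d))
    (μX : Measure (EuclideanSpace ℝ (Fin d))) (hμXP : IsProbabilityMeasure μX)
    (hμX : μX = volume.withDensity fun z => ENNReal.ofReal (p z))
    (μU : Measure ℝ) (hμUP : IsProbabilityMeasure μU)
    (hμU : μU = volume.restrict (Set.Icc (0 : ℝ) 1))
    (hlaw : Measure.map (fun ω => fun i : Fin n => (X i ω, U i ω)) P
      = Measure.pi fun _ : Fin n => μX.prod μU)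
    (A : Fin n → Ω → ℝ)
    (hA : ∀ i ω, A i ω = if U i ω ≤ kn x (X i ω) then 1 else 0)
    (R : Finset (Fin n) → Ω → ℝ)
    (hR : ∀ (I : Finset (Fin n)) (ω : Ω), R I ω =
      if I.Nonempty then 1 / (I.card + ∑ j ∈ Iᶜ, A j ω)
      else if 0 < ∑ i, A i ω then 1 / (∑ i, A i ω) else 0) :
    ∀ I J : Finset (Fin n), Disjoint I J →
      (∀ᵐ ω ∂P, R J ω * ∏ i ∈ I, A i ω = R (I ∪ J) ω * ∏ i ∈ I, A i ω) ∧
      IndepFun (R (I ∪ J)) (fun ω (i : I) => A i.1 ω) P :=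
  stmt_4_general P X U hX hU kn hkm x μX hμXP μU hμUP hlaw A hA R hR
end

section
/- (Variance lower bound) Suppose f : ℝ^d → ℝ is bounded measurable, E[ε_1] = 0 and E[ε_1²] = σ² < ∞. Then E[(f̂(x) − b_n(f,x))²] ≥ σ²·(1 − e^{−d_n(x)})²/d_n(x). -/
open MeasureTheory ProbabilityTheory Real Filter

/-!
Given the design `(Xᵢ, Uᵢ)`, with `N` the number of edges, `f̂ - b` is affine in the noise,
`f̂ - b = C + ∑ᵢ (aᵢ / N) εᵢ`, so averaging over the independent centred noise gives at least
`σ² ∑ᵢ (aᵢ / N)² = σ² N⁻¹` (read as `0` when `N = 0`). Integrating over the design, it remains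
to bound `E[N⁻¹]` from below, which Cauchy–Schwarz does: `P(N ≠ 0)² ≤ E[N] E[N⁻¹]`, where
`E[N] = n c_n(x) = d_n(x)` and `P(N ≠ 0) = 1 - (1 - c_n(x))ⁿ ≥ 1 - e^{-d_n(x)}`.
-/
lemma sq_measureReal_ne_zero_le_integral_mul_integral_inv {Ω : Type*} [MeasurableSpace Ω]
    {μ : Measure Ω} [IsFiniteMeasure μ] {N : Ω → ℝ} (hN : 0 ≤ N) (hNm : Measurable N)
    (hNi : Integrable N μ) (hNi' : Integrable (fun x => (N x)⁻¹) μ) :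
    μ.real {x | N x ≠ 0} ^ 2 ≤ (∫ x, N x ∂μ) * ∫ x, (N x)⁻¹ ∂μ := by
  have hS : MeasurableSet {x | N x ≠ 0} := (hNm (measurableSet_singleton 0)).compl
  have hI : Integrable ({x | N x ≠ 0}.indicator (1 : Ω → ℝ)) μ := (integrable_const 1).indicator hS
  have key : ∀ t : ℝ, 0 ≤ (∫ x, N x ∂μ) * (t * t) + (-2 * μ.real {x | N x ≠ 0}) * t
      + ∫ x, (N x)⁻¹ ∂μ := by
    intro t
    -- `2t - t²N ≤ N⁻¹` on `{N ≠ 0}` is `N (N⁻¹ - t)² ≥ 0`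
    have hpt : ∀ x, 2 * t * {x | N x ≠ 0}.indicator 1 x - t ^ 2 * N x ≤ (N x)⁻¹ := by
      intro x
      by_cases hx : N x = 0
      · simp [hx]
      · have h : N x * ((N x)⁻¹ - t) ^ 2 = (N x)⁻¹ - 2 * t + t ^ 2 * N x := by
          field_simp
          ring
        simp only [Set.indicator_of_mem (show x ∈ {x | N x ≠ 0} from hx), Pi.one_apply]
        linarith [mul_nonneg (hN x) (sq_nonneg ((N x)⁻¹ - t))]
    have := integral_mono ((hI.const_mul (2 * t)).sub (hNi.const_mul (t ^ 2))) hNi' hpt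
    simp only [Pi.sub_apply] at this
    rw [integral_sub (hI.const_mul _) (hNi.const_mul _), integral_const_mul, integral_const_mul,
      integral_indicator_one hS] at this
    nlinarith
  have := discrim_le_zero key
  rw [discrim] at this
  nlinarith

lemma one_sub_pow_le_exp_neg_mul {c : ℝ} (hc : c ≤ 1) (n : ℕ) :
    (1 - c) ^ n ≤ exp (-(n * c)) := by
  rw [← mul_neg, exp_nat_mul]
  exact pow_le_pow_left₀ (by linarith) (one_sub_le_exp_neg c) n

section EdgeCount

variable {β ι : Type*} [Fintype ι] {T : Set β}

/-- With `T = {(z, u) | u ≤ k_n(x, z)}` and `v i = (Xᵢ, Uᵢ)` this is the degree `∑ᵢ a(x, Xᵢ)`. -/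
noncomputable def edgeCount (T : Set β) (v : ι → β) : ℝ := ∑ i, T.indicator 1 (v i)

lemma Set.indicator_one_nonneg (T : Set β) (y : β) : 0 ≤ T.indicator (1 : β → ℝ) y :=
  Set.indicator_nonneg (fun _ _ => zero_le_one) _

lemma edgeCount_nonneg (v : ι → β) : 0 ≤ edgeCount T v :=
  Finset.sum_nonneg fun _ _ => Set.indicator_one_nonneg T _

lemma edgeCount_eq_zero_iff {v : ι → β} : edgeCount T v = 0 ↔ ∀ i, v i ∉ T := by
  rw [edgeCount, Finset.sum_eq_zero_iff_of_nonneg fun _ _ => Set.indicator_one_nonneg T _]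
  simp

lemma one_le_edgeCount {v : ι → β} (h : edgeCount T v ≠ 0) : 1 ≤ edgeCount T v := by
  obtain ⟨i, hi⟩ := not_forall_not.1 (mt edgeCount_eq_zero_iff.2 h)
  calc (1 : ℝ) = T.indicator 1 (v i) := by simp [hi]
    _ ≤ edgeCount T v :=
      Finset.single_le_sum (fun _ _ => Set.indicator_one_nonneg T _) (Finset.mem_univ i)

lemma inv_edgeCount_le_one (v : ι → β) : (edgeCount T v)⁻¹ ≤ 1 := by
  rcases eq_or_ne (edgeCount T v) 0 with h | h
  · simp [h]
  · exact inv_le_one_of_one_le₀ (one_le_edgeCount h)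

lemma edgeCount_le_card (v : ι → β) : edgeCount T v ≤ Fintype.card ι := by
  calc edgeCount T v ≤ ∑ _i : ι, (1 : ℝ) :=
        Finset.sum_le_sum fun i _ => Set.indicator_le_self' (fun _ _ => zero_le_one) (v i)
    _ = Fintype.card ι := by simp

variable [MeasurableSpace β]

lemma measurable_edgeCount (hT : MeasurableSet T) : Measurable (edgeCount (ι := ι) T) :=
  Finset.measurable_sum _ fun i _ => (measurable_const.indicator hT).comp (measurable_pi_apply i)

variable (m : Measure β) [IsProbabilityMeasure m]

lemma integrable_edgeCount (hT : MeasurableSet T) :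
    Integrable (edgeCount T) (Measure.pi fun _ : ι => m) :=
  .of_bound (measurable_edgeCount hT).aestronglyMeasurable (Fintype.card ι) (.of_forall fun v => by
    rw [Real.norm_of_nonneg (edgeCount_nonneg v)]
    exact edgeCount_le_card v)

lemma integrable_inv_edgeCount (hT : MeasurableSet T) :
    Integrable (fun v => (edgeCount T v)⁻¹) (Measure.pi fun _ : ι => m) :=
  .of_bound (measurable_edgeCount hT).inv.aestronglyMeasurable 1 (.of_forall fun v => by
    rw [Real.norm_of_nonneg (inv_nonneg.2 (edgeCount_nonneg v))]
    exact inv_edgeCount_le_one v)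

lemma integral_edgeCount (hT : MeasurableSet T) :
    ∫ v, edgeCount T v ∂Measure.pi (fun _ : ι => m) = Fintype.card ι * m.real T := by
  simp only [edgeCount]
  rw [integral_finsetSum _ fun i _ =>
    integrable_comp_eval (μ := fun _ : ι => m) ((integrable_const 1).indicator hT)]
  simp [integral_comp_eval (μ := fun _ : ι => m) (f := T.indicator (1 : β → ℝ))
    (measurable_const.indicator hT).aestronglyMeasurable, integral_indicator_one hT]

lemma measureReal_edgeCount_ne_zero (hT : MeasurableSet T) :
    (Measure.pi fun _ : ι => m).real {v | edgeCount T v ≠ 0}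
      = 1 - (1 - m.real T) ^ Fintype.card ι := by
  have hS : MeasurableSet {v : ι → β | edgeCount T v = 0} :=
    measurable_edgeCount hT (measurableSet_singleton 0)
  have hzero : {v : ι → β | edgeCount T v = 0} = Set.univ.pi fun _ => Tᶜ := by
    ext v
    simp [edgeCount_eq_zero_iff]
  rw [← Set.compl_ofPred, probReal_compl_eq_one_sub hS, hzero, measureReal_def, Measure.pi_pi,
    ENNReal.toReal_prod]
  simp [← measureReal_def, probReal_compl_eq_one_sub hT]

lemma sq_one_sub_pow_div_le_integral_inv_edgeCount (hT : MeasurableSet T) :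
    (1 - (1 - m.real T) ^ Fintype.card ι) ^ 2 / (Fintype.card ι * m.real T)
      ≤ ∫ v, (edgeCount T v)⁻¹ ∂Measure.pi (fun _ : ι => m) := by
  refine div_le_of_le_mul₀ (by positivity)
    (integral_nonneg fun v => inv_nonneg.2 (edgeCount_nonneg v)) ?_
  rw [mul_comm, ← integral_edgeCount m hT, ← measureReal_edgeCount_ne_zero m hT]
  exact sq_measureReal_ne_zero_le_integral_mul_integral_inv edgeCount_nonneg
    (measurable_edgeCount hT) (integrable_edgeCount m hT) (integrable_inv_edgeCount m hT)

lemma sq_one_sub_exp_div_le_integral_inv_edgeCount (hT : MeasurableSet T) :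
    (1 - exp (-(Fintype.card ι * m.real T))) ^ 2 / (Fintype.card ι * m.real T)
      ≤ ∫ v, (edgeCount T v)⁻¹ ∂Measure.pi (fun _ : ι => m) := by
  refine le_trans ?_ (sq_one_sub_pow_div_le_integral_inv_edgeCount m hT)
  have : 0 ≤ 1 - exp (-(Fintype.card ι * m.real T)) := by
    rw [sub_nonneg, exp_le_one_iff, neg_nonpos]
    positivity
  gcongr
  exact one_sub_pow_le_exp_neg_mul measureReal_le_one _

end EdgeCount

lemma variance_mul_sum_sq_le_integral_sq_const_add {ι : Type*} [Fintype ι] {μ : Measure ℝ}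
    [IsProbabilityMeasure μ] (hμ : MemLp id 2 μ) (C : ℝ) (a : ι → ℝ) :
    Var[id; μ] * ∑ i, a i ^ 2
      ≤ ∫ e, (C + ∑ i, a i * e i) ^ 2 ∂Measure.pi fun _ : ι => μ := by
  have hS : Var[fun e : ι → ℝ => ∑ i, a i * e i; Measure.pi fun _ : ι => μ]
      = Var[id; μ] * ∑ i, a i ^ 2 := by
    have := variance_sum_pi (μ := fun _ : ι => μ) (X := fun i t => a i * t)
      fun i => hμ.const_mul (a i)
    rw [Finset.mul_sum]
    convert this using 2 with i
    · ext e; simp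
    · rw [variance_const_mul, mul_comm]; rfl
  have hm : Measurable fun e : ι → ℝ => ∑ i, a i * e i :=
    Finset.measurable_sum _ fun i _ => by fun_prop
  rw [← hS, ← variance_const_add hm.aestronglyMeasurable C]
  exact variance_le_expectation_sq (hm.const_add C).aestronglyMeasurable

section Estimator

variable {β ι : Type*} [Fintype ι] {T : Set β} {F : β → ℝ}

noncomputable def nwEstimator (T : Set β) (F : β → ℝ) (v : ι → β) (e : ι → ℝ) : ℝ :=
  if 0 < edgeCount T v then (∑ i, (F (v i) + e i) * T.indicator 1 (v i)) / edgeCount T v else 0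

lemma nwEstimator_eq_div (v : ι → β) (e : ι → ℝ) :
    nwEstimator T F v e = (∑ i, (F (v i) + e i) * T.indicator 1 (v i)) / edgeCount T v := by
  rw [nwEstimator, ite_eq_left_iff, not_lt]
  intro h
  rw [le_antisymm h (edgeCount_nonneg v), div_zero]

lemma nwEstimator_eq (v : ι → β) (e : ι → ℝ) :
    nwEstimator T F v e = (∑ i, F (v i) * T.indicator 1 (v i)) / edgeCount T v
      + ∑ i, T.indicator 1 (v i) / edgeCount T v * e i := by
  simp only [nwEstimator_eq_div, add_mul, Finset.sum_add_distrib, add_div, Finset.sum_div]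
  congr 2 with i
  ring

lemma sum_sq_indicator_div_edgeCount (v : ι → β) :
    ∑ i, (T.indicator 1 (v i) / edgeCount T v) ^ 2 = (edgeCount T v)⁻¹ := by
  have hsq : ∀ y, T.indicator (1 : β → ℝ) y ^ 2 = T.indicator 1 y := fun y => by
    by_cases hy : y ∈ T <;> simp [hy]
  simp_rw [div_pow, hsq, ← Finset.sum_div]
  rw [← edgeCount]
  rcases eq_or_ne (edgeCount T v) 0 with h | h
  · simp [h]
  · field_simp

lemma abs_nwEstimator_le {B : ℝ} (hF : ∀ y, |F y| ≤ B) (v : ι → β) (e : ι → ℝ) :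
    |nwEstimator T F v e| ≤ ∑ i, (B + |e i|) := by
  have hterm : ∀ i, |(F (v i) + e i) * T.indicator 1 (v i)| ≤ B + |e i| := fun i => by
    rw [abs_mul, abs_of_nonneg (Set.indicator_one_nonneg T _)]
    calc |F (v i) + e i| * T.indicator 1 (v i) ≤ |F (v i) + e i| * 1 :=
          mul_le_mul_of_nonneg_left (Set.indicator_le_self' (fun _ _ => zero_le_one) _)
            (abs_nonneg _)
      _ ≤ B + |e i| := by linarith [abs_add_le (F (v i)) (e i), hF (v i)]
  have hnum : |∑ i, (F (v i) + e i) * T.indicator 1 (v i)| ≤ ∑ i, (B + |e i|) :=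
    (Finset.abs_sum_le_sum_abs _ _).trans (Finset.sum_le_sum fun i _ => hterm i)
  rw [nwEstimator_eq_div, abs_div, abs_of_nonneg (edgeCount_nonneg v)]
  rcases eq_or_ne (edgeCount T v) 0 with h | h
  · rw [h, div_zero]
    exact (abs_nonneg _).trans hnum
  · exact (div_le_self (abs_nonneg _) (one_le_edgeCount h)).trans hnum

variable {μ : Measure ℝ} [IsProbabilityMeasure μ]

lemma variance_mul_inv_edgeCount_le_integral_sq (hμ : MemLp id 2 μ) (v : ι → β) (b : ℝ) :
    Var[id; μ] * (edgeCount T v)⁻¹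
      ≤ ∫ e, (nwEstimator T F v e - b) ^ 2 ∂Measure.pi fun _ : ι => μ := by
  rw [← sum_sq_indicator_div_edgeCount]
  convert variance_mul_sum_sq_le_integral_sq_const_add hμ
    ((∑ i, F (v i) * T.indicator 1 (v i)) / edgeCount T v - b) _ using 3 with e
  rw [nwEstimator_eq]
  ring

end Estimator

section Fubini

variable {β ι : Type*} [MeasurableSpace β] [Fintype ι] {T : Set β} {F : β → ℝ}
  (m : Measure β) [IsProbabilityMeasure m] {μ : Measure ℝ} [IsProbabilityMeasure μ]

lemma measurable_nwEstimator (hT : MeasurableSet T) (hF : Measurable F) :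
    Measurable fun ve : (ι → β) × (ι → ℝ) => nwEstimator T F ve.1 ve.2 := by
  simp_rw [nwEstimator_eq_div]
  refine (Finset.measurable_sum _ fun i _ => ?_).div ((measurable_edgeCount hT).comp measurable_fst)
  have hvi : Measurable fun ve : (ι → β) × (ι → ℝ) => ve.1 i := by fun_prop
  exact ((hF.comp hvi).add (by fun_prop)).mul ((measurable_const.indicator hT).comp hvi)

lemma memLp_nwEstimator (hT : MeasurableSet T) (hF : Measurable F) {B : ℝ}
    (hFB : ∀ y, |F y| ≤ B) (hμ : MemLp id 2 μ) :
    MemLp (fun ve : (ι → β) × (ι → ℝ) => nwEstimator T F ve.1 ve.2) 2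
      ((Measure.pi fun _ : ι => m).prod (Measure.pi fun _ : ι => μ)) := by
  have hcoord : ∀ i, MemLp (fun ve : (ι → β) × (ι → ℝ) => ve.2 i) 2
      ((Measure.pi fun _ : ι => m).prod (Measure.pi fun _ : ι => μ)) := fun i =>
    hμ.comp_measurePreserving ((measurePreserving_eval _ i).comp measurePreserving_snd)
  refine (memLp_finsetSum Finset.univ fun i _ => (memLp_const B).add (hcoord i).norm).of_le
    (measurable_nwEstimator hT hF).aestronglyMeasurable (.of_forall fun ve => ?_)
  have hB : ∀ i, 0 ≤ B + |ve.2 i| := fun i =>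
    add_nonneg ((abs_nonneg _).trans (hFB (ve.1 i))) (abs_nonneg _)
  simp only [Real.norm_eq_abs, Pi.add_apply]
  rw [abs_of_nonneg (Finset.sum_nonneg fun i _ => hB i)]
  exact abs_nwEstimator_le hFB ve.1 ve.2

lemma variance_mul_integral_inv_edgeCount_le (hT : MeasurableSet T) (hF : Measurable F) {B : ℝ}
    (hFB : ∀ y, |F y| ≤ B) (hμ : MemLp id 2 μ) (b : ℝ) :
    Var[id; μ] * ∫ v, (edgeCount T v)⁻¹ ∂Measure.pi (fun _ : ι => m)
      ≤ ∫ ve, (nwEstimator T F ve.1 ve.2 - b) ^ 2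
          ∂(Measure.pi fun _ : ι => m).prod (Measure.pi fun _ : ι => μ) := by
  have hint : Integrable (fun ve : (ι → β) × (ι → ℝ) => (nwEstimator T F ve.1 ve.2 - b) ^ 2)
      ((Measure.pi fun _ : ι => m).prod (Measure.pi fun _ : ι => μ)) :=
    ((memLp_nwEstimator m hT hF hFB hμ).sub (memLp_const b)).integrable_sq
  rw [integral_prod _ hint, ← integral_const_mul]
  exact integral_mono ((integrable_inv_edgeCount m hT).const_mul _) hint.integral_prod_left
    fun v => variance_mul_inv_edgeCount_le_integral_sq hμ v b

end Fubini

lemma measurePreserving_pi_prod_prod_split {ι α β γ : Type*} [Fintype ι] [MeasurableSpace α]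
    [MeasurableSpace β] [MeasurableSpace γ] (μ : Measure α) (ν : Measure β) (ρ : Measure γ)
    [SigmaFinite μ] [SigmaFinite ν] [SigmaFinite ρ] :
    MeasurePreserving (fun w : ι → α × β × γ => (fun i => ((w i).1, (w i).2.1), fun i => (w i).2.2))
      (Measure.pi fun _ => μ.prod (ν.prod ρ))
      ((Measure.pi fun _ => μ.prod ν).prod (Measure.pi fun _ => ρ)) :=
  (measurePreserving_arrowProdEquivProdArrow (α × β) γ ι (fun _ => μ.prod ν) fun _ => ρ).comp
    (measurePreserving_pi _ _ fun _ => (measurePreserving_prodAssoc μ ν ρ).symm)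

lemma prod_restrict_Icc_setOf_le {α : Type*} [MeasurableSpace α] (μ : Measure α) [SFinite μ]
    {g : α → ℝ} (hg : Measurable g) (hg1 : ∀ z, g z ≤ 1) :
    μ.prod (volume.restrict (Set.Icc 0 1)) {y | y.2 ≤ g y.1} = ∫⁻ z, ENNReal.ofReal (g z) ∂μ := by
  have hS : MeasurableSet {y : α × ℝ | y.2 ≤ g y.1} :=
    measurableSet_le measurable_snd (hg.comp measurable_fst)
  rw [Measure.prod_apply hS]
  congr with z
  have : Set.Iic (g z) ∩ Set.Icc 0 1 = Set.Icc 0 (g z) := by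
    ext u
    simp only [Set.mem_inter_iff, Set.mem_Iic, Set.mem_Icc]
    constructor
    · rintro ⟨h, h0, -⟩; exact ⟨h0, h⟩
    · rintro ⟨h0, h⟩; exact ⟨h, h0, h.trans (hg1 z)⟩
  rw [show Prod.mk z ⁻¹' {y : α × ℝ | y.2 ≤ g y.1} = Set.Iic (g z) from rfl,
    Measure.restrict_apply measurableSet_Iic, this, Real.volume_Icc, sub_zero]

lemma measureReal_withDensity_prod_restrict_Icc_setOf_le {α : Type*} [MeasurableSpace α]
    {μ : Measure α} [SFinite μ] {p g : α → ℝ} (hp : ∀ z, 0 ≤ p z) (hpm : Measurable p)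
    (hg : ∀ z, g z ∈ Set.Icc 0 1) (hgm : Measurable g) (hint : Integrable (fun z => g z * p z) μ) :
    ((μ.withDensity fun z => ENNReal.ofReal (p z)).prod (volume.restrict (Set.Icc 0 1))).real
      {y | y.2 ≤ g y.1} = ∫ z, g z * p z ∂μ := by
  rw [measureReal_def, prod_restrict_Icc_setOf_le _ hgm fun z => (hg z).2,
    lintegral_withDensity_eq_lintegral_mul _ hpm.ennreal_ofReal hgm.ennreal_ofReal,
    ← ENNReal.toReal_ofReal (integral_nonneg fun z => mul_nonneg (hg z).1 (hp z)),
    ofReal_integral_eq_lintegral_ofReal hint (.of_forall fun z => mul_nonneg (hg z).1 (hp z))]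
  congr 2 with z
  simp [ENNReal.ofReal_mul (hp z), mul_comm]

theorem stmt_9_general
    {n d : ℕ} {Ω : Type} [MeasurableSpace Ω]
    (P : Measure Ω) [IsProbabilityMeasure P]
    (X : Fin n → Ω → EuclideanSpace ℝ (Fin d)) (U : Fin n → Ω → ℝ) (ε : Fin n → Ω → ℝ)
    (hX : ∀ i, Measurable (X i)) (hU : ∀ i, Measurable (U i))
    (hε : ∀ i, Measurable (ε i))
    (p : EuclideanSpace ℝ (Fin d) → ℝ)
    (hp0 : ∀ z, 0 ≤ p z) (hpm : Measurable p)
    (kn : EuclideanSpace ℝ (Fin d) → EuclideanSpace ℝ (Fin d) → ℝ)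
    (hk01 : ∀ u v, kn u v ∈ Set.Icc (0 : ℝ) 1)
    (hkm : Measurable (Function.uncurry kn))
    (x : EuclideanSpace ℝ (Fin d))
    (μX : Measure (EuclideanSpace ℝ (Fin d))) (hμXP : IsProbabilityMeasure μX)
    (hμX : μX = volume.withDensity fun z => ENNReal.ofReal (p z))
    (μU : Measure ℝ) (hμUP : IsProbabilityMeasure μU)
    (hμU : μU = volume.restrict (Set.Icc (0 : ℝ) 1))
    (με : Measure ℝ) (hμεP : IsProbabilityMeasure με)
    (hlaw : Measure.map (fun ω => fun i : Fin n => (X i ω, U i ω, ε i ω)) P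
      = Measure.pi fun _ : Fin n => μX.prod (μU.prod με))
    (A : Fin n → Ω → ℝ)
    (hA : ∀ i ω, A i ω = if U i ω ≤ kn x (X i ω) then 1 else 0)
    (cnx dnx : ℝ)
    (hc : cnx = ∫ z, kn x z * p z) (hcpos : 0 < cnx)
    (hd : dnx = n * cnx)
    (hεmean : ∫ t : ℝ, t ∂με = 0)
    (σ : ℝ) (hε2 : Integrable (fun t : ℝ => t ^ 2) με)
    (hεvar : ∫ t : ℝ, t ^ 2 ∂με = σ ^ 2)
    (f : EuclideanSpace ℝ (Fin d) → ℝ) (B : ℝ)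
    (hfm : Measurable f) (hfB : ∀ z, |f z| ≤ B)
    (bnfx : ℝ)
    (Y : Fin n → Ω → ℝ) (hY : ∀ i ω, Y i ω = f (X i ω) + ε i ω)
    (fhat : Ω → ℝ)
    (hfhat : ∀ ω, fhat ω =
      if 0 < ∑ i, A i ω then (∑ i, Y i ω * A i ω) / (∑ i, A i ω) else 0)
    :
    σ ^ 2 * (1 - Real.exp (-dnx)) ^ 2 / dnx ≤ ∫ ω, (fhat ω - bnfx) ^ 2 ∂P := by
  subst hd
  set T : Set (EuclideanSpace ℝ (Fin d) × ℝ) := {y | y.2 ≤ kn x y.1}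
  have hknx : Measurable (kn x) := hkm.comp measurable_prodMk_left
  have hT : MeasurableSet T := measurableSet_le measurable_snd (hknx.comp measurable_fst)
  have hmT : (μX.prod μU).real T = cnx := by
    rw [hμX, hμU, hc, measureReal_withDensity_prod_restrict_Icc_setOf_le hp0 hpm (hk01 x) hknx
      (.of_integral_ne_zero (hc ▸ hcpos.ne'))]
  have hsplit : MeasurePreserving (fun ω => ((fun i => (X i ω, U i ω)), fun i => ε i ω)) P
      ((Measure.pi fun _ : Fin n => μX.prod μU).prod (Measure.pi fun _ : Fin n => με)) :=
    (measurePreserving_pi_prod_prod_split μX μU με).comp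
      ⟨measurable_pi_lambda _ fun i => (hX i).prodMk ((hU i).prodMk (hε i)), hlaw⟩
  have hfhat_eq : ∀ ω, fhat ω = nwEstimator T (fun y => f y.1) (fun i => (X i ω, U i ω))
      (fun i => ε i ω) := fun ω => by
    simp [hfhat, hA, hY, nwEstimator, edgeCount, T, Set.indicator_apply]
  have hμε : MemLp id 2 με := (memLp_two_iff_integrable_sq aestronglyMeasurable_id).2 hε2
  have hvar : Var[id; με] = σ ^ 2 := by
    rw [variance_eq_sub hμε]
    simp [hεmean, hεvar]
  have hF : Measurable fun y : EuclideanSpace ℝ (Fin d) × ℝ => f y.1 := hfm.comp measurable_fst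
  calc σ ^ 2 * (1 - exp (-(n * cnx))) ^ 2 / (n * cnx)
      = σ ^ 2 * ((1 - exp (-(n * cnx))) ^ 2 / (n * cnx)) := mul_div_assoc _ _ _
    _ ≤ σ ^ 2 * ∫ v, (edgeCount T v)⁻¹ ∂Measure.pi fun _ : Fin n => μX.prod μU := by
        gcongr
        simpa [hmT] using sq_one_sub_exp_div_le_integral_inv_edgeCount (ι := Fin n) (μX.prod μU) hT
    _ ≤ ∫ ve, (nwEstimator T (fun y => f y.1) ve.1 ve.2 - bnfx) ^ 2
          ∂(Measure.pi fun _ : Fin n => μX.prod μU).prod (Measure.pi fun _ : Fin n => με) :=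
        hvar ▸ variance_mul_integral_inv_edgeCount_le _ hT hF (fun y => hfB y.1) hμε bnfx
    _ = ∫ ω, (fhat ω - bnfx) ^ 2 ∂P := by
        rw [← hsplit.map_eq, integral_map hsplit.measurable.aemeasurable
          (((measurable_nwEstimator hT hF).sub_const bnfx).pow_const 2).aestronglyMeasurable]
        simp only [hfhat_eq]

/-- (Variance lower bound.) For bounded measurable `f` and centered noise
with `E[ε_1²] = σ² < ∞`,
`E[(f̂(x) − b_n(f,x))²] ≥ σ² (1 − e^{−d_n(x)})² / d_n(x)`. -/
theorem stmt_9
    {n d : ℕ} {Ω : Type} [MeasurableSpace Ω]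
    (P : Measure Ω) [IsProbabilityMeasure P]
    (X : Fin n → Ω → EuclideanSpace ℝ (Fin d)) (U : Fin n → Ω → ℝ) (ε : Fin n → Ω → ℝ)
    (hX : ∀ i, Measurable (X i)) (hU : ∀ i, Measurable (U i))
    (hε : ∀ i, Measurable (ε i))
    (p : EuclideanSpace ℝ (Fin d) → ℝ)
    (hp0 : ∀ z, 0 ≤ p z) (hpm : Measurable p) (hp1 : ∫ z, p z = 1)
    (kn : EuclideanSpace ℝ (Fin d) → EuclideanSpace ℝ (Fin d) → ℝ)
    (hk01 : ∀ u v, kn u v ∈ Set.Icc (0 : ℝ) 1)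
    (hkm : Measurable (Function.uncurry kn))
    (x : EuclideanSpace ℝ (Fin d))
    (μX : Measure (EuclideanSpace ℝ (Fin d))) (hμXP : IsProbabilityMeasure μX)
    (hμX : μX = volume.withDensity fun z => ENNReal.ofReal (p z))
    (μU : Measure ℝ) (hμUP : IsProbabilityMeasure μU)
    (hμU : μU = volume.restrict (Set.Icc (0 : ℝ) 1))
    (με : Measure ℝ) (hμεP : IsProbabilityMeasure με)
    (hlaw : Measure.map (fun ω => fun i : Fin n => (X i ω, U i ω, ε i ω)) P
      = Measure.pi fun _ : Fin n => μX.prod (μU.prod με))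
    (A : Fin n → Ω → ℝ)
    (hA : ∀ i ω, A i ω = if U i ω ≤ kn x (X i ω) then 1 else 0)
    (cnx dnx : ℝ)
    (hc : cnx = ∫ z, kn x z * p z) (hcpos : 0 < cnx)
    (hd : dnx = n * cnx)
    (hεint : Integrable (fun t : ℝ => t) με) (hεmean : ∫ t : ℝ, t ∂με = 0)
    (σ : ℝ) (hε2 : Integrable (fun t : ℝ => t ^ 2) με)
    (hεvar : ∫ t : ℝ, t ^ 2 ∂με = σ ^ 2)
    (f : EuclideanSpace ℝ (Fin d) → ℝ) (B : ℝ)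
    (hfm : Measurable f) (hfB : ∀ z, |f z| ≤ B)
    (Tfx bnfx : ℝ)
    (hT : Tfx = ∫ z, f z * (kn x z * p z)) (hb : bnfx = Tfx / cnx)
    (Y : Fin n → Ω → ℝ) (hY : ∀ i ω, Y i ω = f (X i ω) + ε i ω)
    (fhat : Ω → ℝ)
    (hfhat : ∀ ω, fhat ω =
      if 0 < ∑ i, A i ω then (∑ i, Y i ω * A i ω) / (∑ i, A i ω) else 0)
    :
    σ ^ 2 * (1 - Real.exp (-dnx)) ^ 2 / dnx ≤ ∫ ω, (fhat ω - bnfx) ^ 2 ∂P :=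
  stmt_9_general P X U ε hX hU hε p hp0 hpm kn hk01 hkm x μX hμXP hμX μU hμUP hμU με hμεP hlaw A hA
    cnx dnx hc hcpos hd hεmean σ hε2 hεvar f B hfm hfB bnfx Y hY fhat hfhat
end

section
/- Suppose K : ℝ^d → [0,1] is measurable and satisfies K1: K(z) ≥ (1/2)·1{‖z‖ ≤ M₁}, and K2: K(z) ≤ 1{‖z‖ ≤ M₂}, for some M₁, M₂ > 0. Let p be a probability density with Q = supp(p), let 0 < a ≤ 1 and L > 0, and suppose f : ℝ^d → ℝ satisfies |f(x) − f(z)| ≤ L‖x−z‖^a for all x, z ∈ Q. Let α_n ∈ (0,1], h_n > 0, k_n(x,z) = α_n K((x−z)/h_n), c_n(x) = ∫ k_n(x,z) p(z) dz and b_n(f,x) = (∫ f(z) k_n(x,z) p(z) dz)/c_n(x). Then sup_{x∈Q} |b_n(f,x) − f(x)| ≤ 2·L·M₂^a·h_n^a. -/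
/-!
Fix `x ∈ Q` and the weight `w z = α K((x - z)/h) p z`. Then `b(f, x)` is the `w`-weighted
average of `f`, so `|b(f, x) - f(x)|` is at most the supremum of `|f z - f x|` over the points
where `w z ≠ 0`. By K2 these lie within `M₂ h` of `x`, and almost all of them lie in the support
`Q` of `p`, where the Hölder bound applies. K1 together with `x ∈ Q` makes the total weight
`c(x)` positive.
-/

open MeasureTheory Metric Real

section WeightedAverage

variable {α : Type*} [MeasurableSpace α] {μ : Measure α}

lemma abs_integral_mul_div_integral_sub_le {g w : α → ℝ} {c C : ℝ}
    (hw0 : ∀ z, 0 ≤ w z) (hw : Integrable w μ) (hpos : 0 < ∫ z, w z ∂μ)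
    (hg : AEStronglyMeasurable g μ) (hbound : ∀ᵐ z ∂μ, w z ≠ 0 → |g z - c| ≤ C) :
    |(∫ z, g z * w z ∂μ) / (∫ z, w z ∂μ) - c| ≤ C := by
  have hweighted : ∀ᵐ z ∂μ, |g z - c| * w z ≤ C * w z := by
    filter_upwards [hbound] with z hz
    rcases eq_or_ne (w z) 0 with hzero | hne
    · simp [hzero]
    · exact mul_le_mul_of_nonneg_right (hz hne) (hw0 z)
  have hgw : Integrable (fun z => g z * w z) μ := by
    refine (hw.const_mul (|c| + C)).mono' (hg.mul hw.aestronglyMeasurable) ?_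
    filter_upwards [hweighted] with z hz
    rw [Real.norm_eq_abs, abs_mul, abs_of_nonneg (hw0 z)]
    nlinarith [abs_sub_abs_le_abs_sub (g z) c, hw0 z]
  have hcentered :
      (∫ z, g z * w z ∂μ) - (∫ z, w z ∂μ) * c = ∫ z, (g z - c) * w z ∂μ := by
    rw [mul_comm, ← integral_const_mul, ← integral_sub hgw (hw.const_mul c)]
    simp only [sub_mul, mul_comm c]
  rw [div_sub' hpos.ne', abs_div, abs_of_pos hpos, div_le_iff₀ hpos, hcentered,
    ← integral_const_mul, ← Real.norm_eq_abs]
  refine norm_integral_le_of_norm_le (hw.const_mul C) ?_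
  filter_upwards [hweighted] with z hz
  rwa [Real.norm_eq_abs, abs_mul, abs_of_nonneg (hw0 z)]

lemma integral_pos_of_const_mul_le_on {w p : α → ℝ} {s : Set α} {c : ℝ} (hc : 0 < c)
    (hs : MeasurableSet s) (hw0 : ∀ z, 0 ≤ w z) (hw : Integrable w μ) (hp : Integrable p μ)
    (hps : 0 < ∫ z in s, p z ∂μ) (hle : ∀ z ∈ s, c * p z ≤ w z) :
    0 < ∫ z, w z ∂μ :=
  calc 0 < c * ∫ z in s, p z ∂μ := mul_pos hc hps
    _ = ∫ z in s, c * p z ∂μ := by rw [integral_const_mul]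
    _ ≤ ∫ z in s, w z ∂μ :=
      setIntegral_mono_on (hp.const_mul c).integrableOn hw.integrableOn hs hle
    _ ≤ ∫ z, w z ∂μ := setIntegral_le_integral hw (ae_of_all _ hw0)

end WeightedAverage

section Support

variable {X : Type*} [PseudoMetricSpace X] [MeasurableSpace X] {μ : Measure X} {p : X → ℝ}

lemma mem_support_withDensity_ofReal_iff [OpensMeasurableSpace X] (hp0 : ∀ z, 0 ≤ p z)
    (hp : Integrable p μ) (y : X) :
    y ∈ (μ.withDensity fun z => ENNReal.ofReal (p z)).support ↔
      ∀ r : ℝ, 0 < r → 0 < ∫ z in ball y r, p z ∂μ := by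
  rw [nhds_basis_ball.mem_measureSupport]
  refine forall₂_congr fun r _ => ?_
  rw [withDensity_apply _ measurableSet_ball,
    ← ofReal_integral_eq_lintegral_ofReal hp.integrableOn (ae_of_all _ hp0), ENNReal.ofReal_pos]

lemma ae_mem_support_withDensity_ofReal [SecondCountableTopology X] (hp : AEMeasurable p μ) :
    ∀ᵐ z ∂μ, 0 < p z → z ∈ (μ.withDensity fun z => ENNReal.ofReal (p z)).support := by
  have := (ae_withDensity_iff' hp.ennreal_ofReal).1 Measure.support_mem_ae
  simp only [ne_eq, ENNReal.ofReal_eq_zero, not_le] at this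
  exact this

end Support

section ScaledKernel

variable {E : Type*} [NormedAddCommGroup E] [NormedSpace ℝ E] {K p : E → ℝ} {c h M : ℝ}

lemma norm_inv_smul_le_iff (hh : 0 < h) (v : E) :
    ‖h⁻¹ • v‖ ≤ M ↔ ‖v‖ ≤ M * h := by
  rw [norm_smul, norm_inv, Real.norm_of_nonneg hh.le, inv_mul_le_iff₀ hh, mul_comm]

lemma half_le_of_mem_ball (hK1 : ∀ z, 1 / 2 * (if ‖z‖ ≤ M then (1 : ℝ) else 0) ≤ K z)
    (hh : 0 < h) {x z : E} (hz : z ∈ ball x (M * h)) : 1 / 2 ≤ K (h⁻¹ • (x - z)) := by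
  have hnorm : ‖h⁻¹ • (x - z)‖ ≤ M := by
    rw [norm_inv_smul_le_iff hh, ← dist_eq_norm, dist_comm]
    exact (mem_ball.1 hz).le
  simpa [hnorm] using hK1 (h⁻¹ • (x - z))

lemma norm_sub_le_of_ne_zero (hK0 : ∀ z, 0 ≤ K z)
    (hK2 : ∀ z, K z ≤ if ‖z‖ ≤ M then (1 : ℝ) else 0) (hh : 0 < h) {x z : E}
    (hKz : K (h⁻¹ • (x - z)) ≠ 0) : ‖z - x‖ ≤ M * h := by
  by_contra hfar
  have hnorm : ¬ ‖h⁻¹ • (x - z)‖ ≤ M := by rwa [norm_inv_smul_le_iff hh, norm_sub_rev]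
  have := hK2 (h⁻¹ • (x - z))
  rw [if_neg hnorm] at this
  exact hKz (le_antisymm this (hK0 _))

variable [MeasurableSpace E] [BorelSpace E] {μ : Measure E}

lemma integrable_scaled_kernel_mul (hKm : Measurable K) (hK0 : ∀ z, 0 ≤ K z)
    (hK1 : ∀ z, K z ≤ 1) (hc : 0 ≤ c) (hp : Integrable p μ) (x : E) :
    Integrable (fun z => c * K (h⁻¹ • (x - z)) * p z) μ := by
  have hmeas : Measurable fun z => c * K (h⁻¹ • (x - z)) :=
    measurable_const.mul (hKm.comp (by fun_prop))
  refine hp.bdd_mul (c := c) hmeas.aestronglyMeasurable (ae_of_all _ fun z => ?_)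
  rw [Real.norm_eq_abs, abs_of_nonneg (mul_nonneg hc (hK0 _))]
  exact mul_le_of_le_one_right hc (hK1 _)

lemma integral_scaled_kernel_mul_pos (hK0 : ∀ z, 0 ≤ K z)
    (hK1 : ∀ z, 1 / 2 * (if ‖z‖ ≤ M then (1 : ℝ) else 0) ≤ K z)
    (hc : 0 < c) (hh : 0 < h) (hM : 0 < M) (hp0 : ∀ z, 0 ≤ p z) (hp : Integrable p μ) {x : E}
    (hw : Integrable (fun z => c * K (h⁻¹ • (x - z)) * p z) μ)
    (hx : ∀ r : ℝ, 0 < r → 0 < ∫ z in ball x r, p z ∂μ) :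
    0 < ∫ z, c * K (h⁻¹ • (x - z)) * p z ∂μ := by
  refine integral_pos_of_const_mul_le_on (half_pos hc) measurableSet_ball
    (fun z => by have := hK0 (h⁻¹ • (x - z)); have := hp0 z; positivity) hw hp
    (hx _ (mul_pos hM hh)) fun z hz => ?_
  have := half_le_of_mem_ball hK1 hh hz
  have := hp0 z
  calc c / 2 * p z = c * (1 / 2) * p z := by ring
    _ ≤ c * K (h⁻¹ • (x - z)) * p z := by gcongr

end ScaledKernel

theorem stmt_14_general
    {d : ℕ}
    (K : EuclideanSpace ℝ (Fin d) → ℝ) (hKm : Measurable K) (hK01 : ∀ z, K z ∈ Set.Icc (0 : ℝ) 1)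
    (M₁ M₂ : ℝ) (hM₁ : 0 < M₁) (hM₂ : 0 < M₂)
    (hK1 : ∀ z : EuclideanSpace ℝ (Fin d), (1 / 2) * (if ‖z‖ ≤ M₁ then (1 : ℝ) else 0) ≤ K z)
    (hK2 : ∀ z : EuclideanSpace ℝ (Fin d), K z ≤ (if ‖z‖ ≤ M₂ then (1 : ℝ) else 0))
    (αn hn : ℝ) (hα : 0 < αn) (hh : 0 < hn)
    (p : EuclideanSpace ℝ (Fin d) → ℝ)
    (hp0 : ∀ z, 0 ≤ p z) (hp1 : ∫ z, p z = 1)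
    (Q : Set (EuclideanSpace ℝ (Fin d)))
    (hQ : Q = {y : EuclideanSpace ℝ (Fin d) | ∀ r : ℝ, 0 < r → 0 < ∫ z in Metric.ball y r, p z})
    (a L : ℝ) (ha0 : 0 < a) (hL : 0 < L)
    (f : EuclideanSpace ℝ (Fin d) → ℝ) (hfm : Measurable f)
    (hfhol : ∀ u ∈ Q, ∀ v ∈ Q, |f u - f v| ≤ L * ‖u - v‖ ^ a)
    (cn Tn bn : EuclideanSpace ℝ (Fin d) → ℝ)
    (hcn : ∀ x, cn x = ∫ z, αn * K (hn⁻¹ • (x - z)) * p z)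
    (hTn : ∀ x, Tn x = ∫ z, f z * (αn * K (hn⁻¹ • (x - z)) * p z))
    (hbn : ∀ x, bn x = Tn x / cn x) :
    ∀ x ∈ Q, |bn x - f x| ≤ 2 * L * M₂ ^ a * hn ^ a := by
  intro x hx
  have hp : Integrable p := .of_integral_ne_zero (by simp [hp1])
  have hQ_eq : Q = (volume.withDensity fun z => ENNReal.ofReal (p z)).support := by
    ext y
    rw [mem_support_withDensity_ofReal_iff hp0 hp, hQ]
    rfl
  have hK0 (z) : 0 ≤ K z := (hK01 z).1
  have hw0 (z) : 0 ≤ αn * K (hn⁻¹ • (x - z)) * p z := by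
    have := hK0 (hn⁻¹ • (x - z)); have := hp0 z; positivity
  have hw := integrable_scaled_kernel_mul (h := hn) hKm hK0 (fun z => (hK01 z).2) hα.le hp x
  have hcx := integral_scaled_kernel_mul_pos hK0 hK1 hα hh hM₁ hp0 hp hw
    ((mem_support_withDensity_ofReal_iff hp0 hp x).1 (hQ_eq ▸ hx))
  have hbound : ∀ᵐ z, αn * K (hn⁻¹ • (x - z)) * p z ≠ 0 →
      |f z - f x| ≤ L * (M₂ * hn) ^ a := by
    filter_upwards [ae_mem_support_withDensity_ofReal hp.aemeasurable] with z hsupp hwz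
    have hzQ : z ∈ Q := hQ_eq ▸ hsupp ((hp0 z).lt_of_ne (right_ne_zero_of_mul hwz).symm)
    have hnear := norm_sub_le_of_ne_zero hK0 hK2 hh (right_ne_zero_of_mul (left_ne_zero_of_mul hwz))
    calc |f z - f x| ≤ L * ‖z - x‖ ^ a := hfhol z hzQ x hx
      _ ≤ L * (M₂ * hn) ^ a :=
        mul_le_mul_of_nonneg_left (rpow_le_rpow (norm_nonneg _) hnear ha0.le) hL.le
  calc |bn x - f x| ≤ L * (M₂ * hn) ^ a := by
        rw [hbn, hTn, hcn]
        exact abs_integral_mul_div_integral_sub_le hw0 hw hcx hfm.aestronglyMeasurable hbound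
    _ = L * M₂ ^ a * hn ^ a := by rw [mul_rpow hM₂.le hh.le, mul_assoc]
    _ ≤ 2 * L * M₂ ^ a * hn ^ a := by
      have : 0 ≤ L * M₂ ^ a * hn ^ a := by positivity
      linarith

/-- (Uniform bias bound.) Under K1 and K2, if `f` is `a`-Hölder with
constant `L` on `Q = supp(p)`, then `sup_{x ∈ Q} |b_n(f,x) − f(x)| ≤ 2 L M₂^a h_n^a`. -/
theorem stmt_14
    {d : ℕ}
    (K : EuclideanSpace ℝ (Fin d) → ℝ) (hKm : Measurable K) (hK01 : ∀ z, K z ∈ Set.Icc (0 : ℝ) 1)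
    (M₁ M₂ : ℝ) (hM₁ : 0 < M₁) (hM₂ : 0 < M₂)
    (hK1 : ∀ z : EuclideanSpace ℝ (Fin d), (1 / 2) * (if ‖z‖ ≤ M₁ then (1 : ℝ) else 0) ≤ K z)
    (hK2 : ∀ z : EuclideanSpace ℝ (Fin d), K z ≤ (if ‖z‖ ≤ M₂ then (1 : ℝ) else 0))
    (αn hn : ℝ) (hα : 0 < αn) (hα1 : αn ≤ 1) (hh : 0 < hn)
    (p : EuclideanSpace ℝ (Fin d) → ℝ)
    (hp0 : ∀ z, 0 ≤ p z) (hpm : Measurable p) (hp1 : ∫ z, p z = 1)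
    (Q : Set (EuclideanSpace ℝ (Fin d)))
    (hQ : Q = {y : EuclideanSpace ℝ (Fin d) | ∀ r : ℝ, 0 < r → 0 < ∫ z in Metric.ball y r, p z})
    (a L : ℝ) (ha0 : 0 < a) (ha1 : a ≤ 1) (hL : 0 < L)
    (f : EuclideanSpace ℝ (Fin d) → ℝ) (hfm : Measurable f)
    (hfhol : ∀ u ∈ Q, ∀ v ∈ Q, |f u - f v| ≤ L * ‖u - v‖ ^ a)
    (cn Tn bn : EuclideanSpace ℝ (Fin d) → ℝ)
    (hcn : ∀ x, cn x = ∫ z, αn * K (hn⁻¹ • (x - z)) * p z)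
    (hTn : ∀ x, Tn x = ∫ z, f z * (αn * K (hn⁻¹ • (x - z)) * p z))
    (hbn : ∀ x, bn x = Tn x / cn x) :
    ∀ x ∈ Q, |bn x - f x| ≤ 2 * L * M₂ ^ a * hn ^ a :=
  stmt_14_general K hKm hK01 M₁ M₂ hM₁ hM₂ hK1 hK2 αn hn hα hh p hp0 hp1 Q hQ a L ha0 hL f hfm hfhol
    cn Tn bn hcn hTn hbn
end

section
/- Suppose K : ℝ^d → [0,1] is measurable and satisfies K1: K(z) ≥ (1/2)·1{‖z‖ ≤ M₁}, and K2: K(z) ≤ 1{‖z‖ ≤ M₂}, for some M₁, M₂ > 0. Let p be a probability density on ℝ^d and let (h_n) be a sequence of positive reals with h_n → 0. Then for Lebesgue-almost every x ∈ ℝ^d, (1/2)·v_d·M₁^d·p(x) ≤ liminf_{n→∞} h_n^{−d} ∫_{ℝ^d} K((x−z)/h_n) p(z) dz ≤ limsup_{n→∞} h_n^{−d} ∫_{ℝ^d} K((x−z)/h_n) p(z) dz ≤ v_d·M₂^d·p(x). -/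
open MeasureTheory Filter Topology Metric Module

/-!
Since `½ · 1{‖·‖ ≤ M₁} ≤ K ≤ 1{‖·‖ ≤ M₂}`, the quantity `h⁻ᵈ ∫ K((x - z)/h) p(z) dz` lies between
`½ h⁻ᵈ ∫_{B(x, M₁ h)} p` and `h⁻ᵈ ∫_{B(x, M₂ h)} p`. These are `½ v_d M₁ᵈ` and `v_d M₂ᵈ` times
averages of `p` over balls shrinking to `x`, which converge to `p x` at almost every `x` by the
Lebesgue differentiation theorem.
-/

lemma norm_inv_smul_sub_le_iff_mem_closedBall {E : Type*} [NormedAddCommGroup E]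
    [NormedSpace ℝ E] {h : ℝ} (hh : 0 < h) (M : ℝ) (x z : E) :
    ‖h⁻¹ • (x - z)‖ ≤ M ↔ z ∈ closedBall x (M * h) := by
  rw [norm_smul, Real.norm_eq_abs, abs_of_pos (inv_pos.2 hh), inv_mul_le_iff₀ hh,
    mem_closedBall, dist_comm, dist_eq_norm, mul_comm]

section Kernel

variable {E : Type*} [NormedAddCommGroup E] [NormedSpace ℝ E] [MeasurableSpace E]
  {μ : Measure E} {K p : E → ℝ} {h M : ℝ}

lemma integrable_kernel_mul [BorelSpace E] (hKm : Measurable K)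
    (hK01 : ∀ z, K z ∈ Set.Icc (0 : ℝ) 1) (hp : Integrable p μ) (h : ℝ) (x : E) :
    Integrable (fun z => K (h⁻¹ • (x - z)) * p z) μ :=
  hp.bdd_mul (c := 1)
    (hKm.comp ((continuous_const.sub continuous_id).const_smul _).measurable).aestronglyMeasurable
    (Eventually.of_forall fun _ =>
      abs_le.2 ⟨(neg_nonpos.2 zero_le_one).trans (hK01 _).1, (hK01 _).2⟩)

lemma mul_setIntegral_closedBall_le_integral_kernel_mul [OpensMeasurableSpace E] (hh : 0 < h)
    {c : ℝ} (hK : ∀ z, c * (if ‖z‖ ≤ M then (1 : ℝ) else 0) ≤ K z) (hp0 : ∀ z, 0 ≤ p z)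
    (hp : Integrable p μ) {x : E} (hint : Integrable (fun z => K (h⁻¹ • (x - z)) * p z) μ) :
    c * ∫ z in closedBall x (M * h), p z ∂μ ≤ ∫ z, K (h⁻¹ • (x - z)) * p z ∂μ := by
  rw [← integral_const_mul, ← integral_indicator measurableSet_closedBall]
  refine integral_mono ((hp.const_mul c).indicator measurableSet_closedBall) hint fun z => ?_
  have hKz := hK (h⁻¹ • (x - z))
  by_cases hz : z ∈ closedBall x (M * h)
  · rw [if_pos ((norm_inv_smul_sub_le_iff_mem_closedBall hh M x z).2 hz), mul_one] at hKz
    rw [Set.indicator_of_mem hz]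
    exact mul_le_mul_of_nonneg_right hKz (hp0 z)
  · rw [if_neg (mt (norm_inv_smul_sub_le_iff_mem_closedBall hh M x z).1 hz), mul_zero] at hKz
    rw [Set.indicator_of_notMem hz]
    exact mul_nonneg hKz (hp0 z)

lemma integral_kernel_mul_le_setIntegral_closedBall [OpensMeasurableSpace E] (hh : 0 < h)
    (hK : ∀ z, K z ≤ if ‖z‖ ≤ M then (1 : ℝ) else 0) (hp0 : ∀ z, 0 ≤ p z)
    (hp : Integrable p μ) {x : E} (hint : Integrable (fun z => K (h⁻¹ • (x - z)) * p z) μ) :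
    ∫ z, K (h⁻¹ • (x - z)) * p z ∂μ ≤ ∫ z in closedBall x (M * h), p z ∂μ := by
  rw [← integral_indicator measurableSet_closedBall]
  refine integral_mono hint (hp.indicator measurableSet_closedBall) fun z => ?_
  have hKz := hK (h⁻¹ • (x - z))
  by_cases hz : z ∈ closedBall x (M * h)
  · rw [if_pos ((norm_inv_smul_sub_le_iff_mem_closedBall hh M x z).2 hz)] at hKz
    rw [Set.indicator_of_mem hz]
    exact mul_le_of_le_one_left (hp0 z) hKz
  · rw [if_neg (mt (norm_inv_smul_sub_le_iff_mem_closedBall hh M x z).1 hz)] at hKz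
    rw [Set.indicator_of_notMem hz]
    exact mul_nonpos_of_nonpos_of_nonneg hKz (hp0 z)

end Kernel

section Differentiation

variable {E : Type*} [NormedAddCommGroup E] [NormedSpace ℝ E] [FiniteDimensional ℝ E]
  [MeasurableSpace E] [BorelSpace E] (μ : Measure E) [μ.IsAddHaarMeasure]

lemma setIntegral_closedBall_div_pow_eq_mul_setAverage (f : E → ℝ) (x : E) {M h : ℝ}
    (hM : 0 ≤ M) (hh : 0 < h) :
    (∫ z in closedBall x (M * h), f z ∂μ) / h ^ finrank ℝ E
      = M ^ finrank ℝ E * μ.real (ball 0 1) * ⨍ z in closedBall x (M * h), f z ∂μ := by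
  rw [← measure_smul_setAverage f measure_closedBall_lt_top.ne, smul_eq_mul,
    Measure.addHaar_real_closedBall μ x (by positivity), mul_pow]
  field_simp

lemma ae_tendsto_setIntegral_closedBall_div_pow {f : E → ℝ} (hf : LocallyIntegrable f μ) :
    ∀ᵐ x ∂μ, ∀ {M : ℝ}, 0 < M → ∀ {h : ℕ → ℝ}, (∀ n, 0 < h n) → Tendsto h atTop (𝓝 0) →
      Tendsto (fun n => (∫ z in closedBall x (M * h n), f z ∂μ) / h n ^ finrank ℝ E) atTop
        (𝓝 (M ^ finrank ℝ E * μ.real (ball 0 1) * f x)) := by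
  filter_upwards [IsUnifLocDoublingMeasure.ae_tendsto_average (μ := μ) hf 1] with x hx M hM h
    hhpos hh0
  have hMh : Tendsto (fun n => M * h n) atTop (𝓝[>] 0) :=
    tendsto_nhdsWithin_of_tendsto_nhds_of_eventually_within _
      (by simpa using hh0.const_mul M) (Eventually.of_forall fun n => mul_pos hM (hhpos n))
  have havg := hx (fun _ => x) _ hMh
    (Eventually.of_forall fun n => mem_closedBall_self (by have := hhpos n; positivity))
  simpa only [setIntegral_closedBall_div_pow_eq_mul_setAverage μ f x hM.le (hhpos _)]
    using havg.const_mul _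

end Differentiation

lemma le_liminf_and_liminf_le_limsup_and_limsup_le {a l u : ℕ → ℝ} {L U : ℝ}
    (hla : ∀ n, l n ≤ a n) (hau : ∀ n, a n ≤ u n)
    (hl : Tendsto l atTop (𝓝 L)) (hu : Tendsto u atTop (𝓝 U)) :
    L ≤ liminf a atTop ∧ liminf a atTop ≤ limsup a atTop ∧ limsup a atTop ≤ U := by
  have hba : IsBoundedUnder (· ≤ ·) atTop a :=
    hu.isBoundedUnder_le.mono_le (Eventually.of_forall hau)
  have hbb : IsBoundedUnder (· ≥ ·) atTop a :=
    hl.isBoundedUnder_ge.mono_ge (Eventually.of_forall hla)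
  refine ⟨?_, liminf_le_limsup hba hbb, ?_⟩
  · exact hl.liminf_eq ▸ liminf_le_liminf (Eventually.of_forall hla) hl.isBoundedUnder_ge
      hba.isCoboundedUnder_ge
  · exact hu.limsup_eq ▸ limsup_le_limsup (Eventually.of_forall hau) hbb.isCoboundedUnder_le
      hu.isBoundedUnder_le

theorem stmt_15_general
    {d : ℕ}
    (K : EuclideanSpace ℝ (Fin d) → ℝ) (hKm : Measurable K) (hK01 : ∀ z, K z ∈ Set.Icc (0 : ℝ) 1)
    (M₁ M₂ : ℝ) (hM₁ : 0 < M₁) (hM₂ : 0 < M₂)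
    (hK1 : ∀ z : EuclideanSpace ℝ (Fin d), (1 / 2) * (if ‖z‖ ≤ M₁ then (1 : ℝ) else 0) ≤ K z)
    (hK2 : ∀ z : EuclideanSpace ℝ (Fin d), K z ≤ (if ‖z‖ ≤ M₂ then (1 : ℝ) else 0))
    (p : EuclideanSpace ℝ (Fin d) → ℝ)
    (hp0 : ∀ z, 0 ≤ p z) (hp1 : ∫ z, p z = 1)
    (h : ℕ → ℝ) (hhpos : ∀ n, 0 < h n)
    (hh0 : Tendsto h atTop (nhds 0))
    (vd : ℝ) (hvd : vd = (volume (Metric.ball (0 : EuclideanSpace ℝ (Fin d)) 1)).toReal) :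
    ∀ᵐ x ∂(volume : Measure (EuclideanSpace ℝ (Fin d))),
      (1 / 2) * vd * M₁ ^ d * p x
          ≤ liminf (fun n => (∫ z, K ((h n)⁻¹ • (x - z)) * p z) / (h n) ^ d) atTop ∧
      liminf (fun n => (∫ z, K ((h n)⁻¹ • (x - z)) * p z) / (h n) ^ d) atTop
          ≤ limsup (fun n => (∫ z, K ((h n)⁻¹ • (x - z)) * p z) / (h n) ^ d) atTop ∧
      limsup (fun n => (∫ z, K ((h n)⁻¹ • (x - z)) * p z) / (h n) ^ d) atTop
          ≤ vd * M₂ ^ d * p x := by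
  have hp : Integrable p := integrable_of_integral_eq_one hp1
  filter_upwards [ae_tendsto_setIntegral_closedBall_div_pow volume hp.locallyIntegrable]
    with x hx
  have hvd' : volume.real (ball (0 : EuclideanSpace ℝ (Fin d)) 1) = vd := hvd.symm
  simp only [finrank_euclideanSpace_fin, hvd'] at hx
  have hint n := integrable_kernel_mul hKm hK01 hp (h n) x
  have hlow := (hx hM₁ hhpos hh0).const_mul (1 / 2)
  have hup := hx hM₂ hhpos hh0
  rw [show (1 / 2) * (M₁ ^ d * vd * p x) = (1 / 2) * vd * M₁ ^ d * p x by ring] at hlow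
  rw [show M₂ ^ d * vd * p x = vd * M₂ ^ d * p x by ring] at hup
  refine le_liminf_and_liminf_le_limsup_and_limsup_le (fun n => ?_) (fun n => ?_) hlow hup
  · rw [← mul_div_assoc]
    exact div_le_div_of_nonneg_right
      (mul_setIntegral_closedBall_le_integral_kernel_mul (hhpos n) hK1 hp0 hp (hint n))
      (pow_pos (hhpos n) d).le
  · exact div_le_div_of_nonneg_right
      (integral_kernel_mul_le_setIntegral_closedBall (hhpos n) hK2 hp0 hp (hint n))
      (pow_pos (hhpos n) d).le

/-- (Lebesgue differentiation heuristic for the local degree.) Under K1 and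
K2, if `h_n → 0`, then for Lebesgue-a.e. `x`,
`½ v_d M₁^d p(x) ≤ liminf h_n^{−d} ∫ K((x−z)/h_n) p(z) dz
  ≤ limsup h_n^{−d} ∫ K((x−z)/h_n) p(z) dz ≤ v_d M₂^d p(x)`. -/
theorem stmt_15
    {d : ℕ}
    (K : EuclideanSpace ℝ (Fin d) → ℝ) (hKm : Measurable K) (hK01 : ∀ z, K z ∈ Set.Icc (0 : ℝ) 1)
    (M₁ M₂ : ℝ) (hM₁ : 0 < M₁) (hM₂ : 0 < M₂)
    (hK1 : ∀ z : EuclideanSpace ℝ (Fin d), (1 / 2) * (if ‖z‖ ≤ M₁ then (1 : ℝ) else 0) ≤ K z)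
    (hK2 : ∀ z : EuclideanSpace ℝ (Fin d), K z ≤ (if ‖z‖ ≤ M₂ then (1 : ℝ) else 0))
    (p : EuclideanSpace ℝ (Fin d) → ℝ)
    (hp0 : ∀ z, 0 ≤ p z) (hpm : Measurable p) (hp1 : ∫ z, p z = 1)
    (h : ℕ → ℝ) (hhpos : ∀ n, 0 < h n)
    (hh0 : Tendsto h atTop (nhds 0))
    (vd : ℝ) (hvd : vd = (volume (Metric.ball (0 : EuclideanSpace ℝ (Fin d)) 1)).toReal) :
    ∀ᵐ x ∂(volume : Measure (EuclideanSpace ℝ (Fin d))),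
      (1 / 2) * vd * M₁ ^ d * p x
          ≤ liminf (fun n => (∫ z, K ((h n)⁻¹ • (x - z)) * p z) / (h n) ^ d) atTop ∧
      liminf (fun n => (∫ z, K ((h n)⁻¹ • (x - z)) * p z) / (h n) ^ d) atTop
          ≤ limsup (fun n => (∫ z, K ((h n)⁻¹ • (x - z)) * p z) / (h n) ^ d) atTop ∧
      limsup (fun n => (∫ z, K ((h n)⁻¹ • (x - z)) * p z) / (h n) ^ d) atTop
          ≤ vd * M₂ ^ d * p x :=
  stmt_15_general K hKm hK01 M₁ M₂ hM₁ hM₂ hK1 hK2 p hp0 hp1 h hhpos hh0 vd hvd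
end

section
/- Suppose K : ℝ^d → [0,1] is measurable and satisfies K1: K(z) ≥ (1/2)·1{‖z‖ ≤ M₁} for some M₁ > 0, and suppose Q = supp(p) has the (r₀,c₀)-measure-retaining property. Let α_n ∈ (0,1], h_n > 0 with M₁h_n < r₀, and let x ∈ Q be such that inf{p(z) : z ∈ Q, ‖x−z‖ ≤ M₁h_n} ≥ p₀(x) > 0. Then with c_n(x) = α_n ∫ K((x−z)/h_n) p(z) dz and d_n(x) = n·c_n(x), one has 1/d_n(x) ≤ 2/(c₀·v_d·M₁^d·n·α_n·h_n^d·p₀(x)). -/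
open MeasureTheory ProbabilityTheory Real Filter

/-!
On `Q ∩ B(x, M₁ hₙ)` the integrand `K((x - z)/hₙ) p(z)` is at least `p₀(x)/2`, by K1 and the
choice of `p₀(x)`. Since `M₁ hₙ < r₀`, the measure-retaining property gives this set volume at
least `c₀ v_d (M₁ hₙ)^d`, so `dₙ(x) ≥ n αₙ c₀ v_d (M₁ hₙ)^d p₀(x) / 2`.
-/

open Metric

lemma isClosed_setOf_forall_pos_setIntegral_ball {X : Type*} [PseudoMetricSpace X]
    [MeasurableSpace X] {μ : Measure X} {p : X → ℝ} (hp0 : 0 ≤ p) (hp : Integrable p μ) :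
    IsClosed {y | ∀ r : ℝ, 0 < r → 0 < ∫ z in ball y r, p z ∂μ} := by
  rw [← isOpen_compl_iff, Metric.isOpen_iff]
  intro y hy
  simp only [Set.mem_compl_iff, Set.mem_ofPred_eq, not_forall, not_lt] at hy
  obtain ⟨r, hr, hle⟩ := hy
  refine ⟨r / 2, half_pos hr, fun y' hy' => ?_⟩
  simp only [Set.mem_compl_iff, Set.mem_ofPred_eq, not_forall, not_lt]
  refine ⟨r / 2, half_pos hr, ?_⟩
  have hsub : ball y' (r / 2) ⊆ ball y r :=
    ball_subset_ball' (by linarith [mem_ball.mp hy'])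
  calc ∫ z in ball y' (r / 2), p z ∂μ ≤ ∫ z in ball y r, p z ∂μ :=
        setIntegral_mono_set hp.integrableOn (Eventually.of_forall hp0) hsub.eventuallyLE
    _ ≤ 0 := hle

lemma toReal_addHaar_ball_of_pos {E : Type*} [NormedAddCommGroup E] [NormedSpace ℝ E]
    [MeasurableSpace E] [BorelSpace E] [FiniteDimensional ℝ E] (μ : Measure E) [μ.IsAddHaarMeasure]
    (x : E) {r : ℝ} (hr : 0 < r) :
    (μ (ball x r)).toReal = r ^ Module.finrank ℝ E * (μ (ball 0 1)).toReal := by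
  rw [Measure.addHaar_ball_of_pos μ x hr, ENNReal.toReal_mul, ENNReal.toReal_ofReal (by positivity)]

lemma half_le_of_norm_sub_le {E : Type*} [NormedAddCommGroup E] [NormedSpace ℝ E]
    {K : E → ℝ} {M₁ h : ℝ} (hK1 : ∀ z : E, (1 / 2) * (if ‖z‖ ≤ M₁ then (1 : ℝ) else 0) ≤ K z)
    (hh : 0 < h) {x z : E} (hxz : ‖x - z‖ ≤ M₁ * h) :
    1 / 2 ≤ K (h⁻¹ • (x - z)) := by
  have hnorm : ‖h⁻¹ • (x - z)‖ ≤ M₁ := by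
    rw [norm_smul, Real.norm_eq_abs, abs_of_pos (inv_pos.mpr hh), inv_mul_le_iff₀ hh, mul_comm]
    exact hxz
  simpa [hnorm] using hK1 (h⁻¹ • (x - z))

lemma integrable_mul_of_mem_Icc {α : Type*} [MeasurableSpace α] {μ : Measure α} {g p : α → ℝ}
    (hg : Measurable g) (hg01 : ∀ z, g z ∈ Set.Icc (0 : ℝ) 1) (hp : Integrable p μ) :
    Integrable (fun z => g z * p z) μ :=
  hp.bdd_mul (c := 1) hg.aestronglyMeasurable (Eventually.of_forall fun z =>
    abs_le.mpr ⟨by linarith [(hg01 z).1], (hg01 z).2⟩)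

lemma mul_measureReal_le_integral {α : Type*} [MeasurableSpace α] {μ : Measure α} {f : α → ℝ}
    {s : Set α} {c : ℝ} (hs : MeasurableSet s) (hμs : μ s ≠ ⊤) (hf0 : 0 ≤ f)
    (hf : Integrable f μ) (hc : ∀ z ∈ s, c ≤ f z) : c * μ.real s ≤ ∫ z, f z ∂μ :=
  (setIntegral_ge_of_const_le_real hs hμs hc hf.integrableOn).trans
    (setIntegral_le_integral hf (Eventually.of_forall hf0))

lemma one_div_le_two_div_of_half_le {a D : ℝ} (hD : 0 < D) (h : D / 2 ≤ a) : 1 / a ≤ 2 / D := by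
  rw [div_le_div_iff₀ (by linarith) hD]
  linarith

theorem stmt_16_general
    {d : ℕ} (n : ℕ)
    (K : EuclideanSpace ℝ (Fin d) → ℝ) (hKm : Measurable K) (hK01 : ∀ z, K z ∈ Set.Icc (0 : ℝ) 1)
    (M₁ : ℝ) (hM₁ : 0 < M₁)
    (hK1 : ∀ z : EuclideanSpace ℝ (Fin d), (1 / 2) * (if ‖z‖ ≤ M₁ then (1 : ℝ) else 0) ≤ K z)
    (αn hn : ℝ) (hα : 0 < αn) (hh : 0 < hn)
    (p : EuclideanSpace ℝ (Fin d) → ℝ)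
    (hp0 : ∀ z, 0 ≤ p z) (hp1 : ∫ z, p z = 1)
    (Q : Set (EuclideanSpace ℝ (Fin d)))
    (hQ : Q = {y : EuclideanSpace ℝ (Fin d) | ∀ r : ℝ, 0 < r → 0 < ∫ z in Metric.ball y r, p z})
    (r₀ c₀ : ℝ) (hc₀ : 0 < c₀)
    (hQmr : ∀ y ∈ Q, ∀ r : ℝ, 0 < r → r ≤ r₀ →
      c₀ * (volume (Metric.ball y r)).toReal ≤ (volume (Q ∩ Metric.ball y r)).toReal)
    (vd : ℝ) (hvd : vd = (volume (Metric.ball (0 : EuclideanSpace ℝ (Fin d)) 1)).toReal)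
    (hhr : M₁ * hn < r₀)
    (x : EuclideanSpace ℝ (Fin d)) (hx : x ∈ Q)
    (p₀x : ℝ) (hp₀x : 0 < p₀x)
    (hinf : ∀ z ∈ Q, ‖x - z‖ ≤ M₁ * hn → p₀x ≤ p z)
    (cnx dnx : ℝ)
    (hcnx : cnx = αn * ∫ z, K (hn⁻¹ • (x - z)) * p z)
    (hdnx : dnx = n * cnx) :
    1 / dnx ≤ 2 / (c₀ * vd * M₁ ^ d * n * αn * hn ^ d * p₀x) := by
  have hpInt : Integrable p := integrable_of_integral_eq_one hp1
  have hQclosed : IsClosed Q := hQ ▸ isClosed_setOf_forall_pos_setIntegral_ball hp0 hpInt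
  set R := M₁ * hn
  have hR : 0 < R := mul_pos hM₁ hh
  set S := Q ∩ ball x R
  have hS : MeasurableSet S := hQclosed.measurableSet.inter measurableSet_ball
  have hvolS : c₀ * (R ^ d * vd) ≤ volume.real S := by
    simpa [hvd, toReal_addHaar_ball_of_pos volume x hR, measureReal_def] using
      hQmr x hx R hR hhr.le
  have hbound : ∀ z ∈ S, p₀x / 2 ≤ K (hn⁻¹ • (x - z)) * p z := fun z ⟨hzQ, hzB⟩ => by
    have hxz : ‖x - z‖ ≤ R := by rw [← dist_eq_norm, dist_comm]; exact (mem_ball.mp hzB).le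
    nlinarith [half_le_of_norm_sub_le hK1 hh hxz, hinf z hzQ hxz, hp0 z]
  have hInt : Integrable (fun z => K (hn⁻¹ • (x - z)) * p z) :=
    integrable_mul_of_mem_Icc (hKm.comp (by fun_prop)) (fun z => hK01 _) hpInt
  have hlower : c₀ * (R ^ d * vd) * (p₀x / 2) ≤ ∫ z, K (hn⁻¹ • (x - z)) * p z :=
    calc c₀ * (R ^ d * vd) * (p₀x / 2) ≤ p₀x / 2 * volume.real S := by
          rw [mul_comm (p₀x / 2)]; gcongr
      _ ≤ _ := mul_measureReal_le_integral hS (measure_inter_lt_top_of_right_ne_top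
          measure_ball_lt_top.ne).ne (fun z => mul_nonneg (hK01 _).1 (hp0 z)) hInt hbound
  rcases n.eq_zero_or_pos with rfl | hn0
  · simp [hdnx] -- both sides are divisions by zero, hence `0`
  have hvd_pos : 0 < vd := hvd ▸ ENNReal.toReal_pos (measure_ball_pos _ _ one_pos).ne'
    measure_ball_lt_top.ne
  refine one_div_le_two_div_of_half_le (by positivity) ?_
  calc _ = n * αn * (c₀ * (R ^ d * vd) * (p₀x / 2)) := by simp only [R, mul_pow]; ring
    _ ≤ n * αn * ∫ z, K (hn⁻¹ • (x - z)) * p z := by gcongr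
    _ = dnx := by rw [hdnx, hcnx, mul_assoc]

/-- Under K1 and the `(r₀,c₀)`-measure-retaining property of `Q = supp(p)`,
if `M₁ h_n < r₀` and `p ≥ p₀(x) > 0` on `Q ∩ B_{M₁h_n}(x)` for `x ∈ Q`, then
`1/d_n(x) ≤ 2/(c₀ v_d M₁^d n α_n h_n^d p₀(x))`. -/
theorem stmt_16
    {d : ℕ} (n : ℕ)
    (K : EuclideanSpace ℝ (Fin d) → ℝ) (hKm : Measurable K) (hK01 : ∀ z, K z ∈ Set.Icc (0 : ℝ) 1)
    (M₁ : ℝ) (hM₁ : 0 < M₁)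
    (hK1 : ∀ z : EuclideanSpace ℝ (Fin d), (1 / 2) * (if ‖z‖ ≤ M₁ then (1 : ℝ) else 0) ≤ K z)
    (αn hn : ℝ) (hα : 0 < αn) (hα1 : αn ≤ 1) (hh : 0 < hn)
    (p : EuclideanSpace ℝ (Fin d) → ℝ)
    (hp0 : ∀ z, 0 ≤ p z) (hpm : Measurable p) (hp1 : ∫ z, p z = 1)
    (Q : Set (EuclideanSpace ℝ (Fin d)))
    (hQ : Q = {y : EuclideanSpace ℝ (Fin d) | ∀ r : ℝ, 0 < r → 0 < ∫ z in Metric.ball y r, p z})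
    (r₀ c₀ : ℝ) (hr₀ : 0 < r₀) (hc₀ : 0 < c₀)
    (hQmr : ∀ y ∈ Q, ∀ r : ℝ, 0 < r → r ≤ r₀ →
      c₀ * (volume (Metric.ball y r)).toReal ≤ (volume (Q ∩ Metric.ball y r)).toReal)
    (vd : ℝ) (hvd : vd = (volume (Metric.ball (0 : EuclideanSpace ℝ (Fin d)) 1)).toReal)
    (hhr : M₁ * hn < r₀)
    (x : EuclideanSpace ℝ (Fin d)) (hx : x ∈ Q)
    (p₀x : ℝ) (hp₀x : 0 < p₀x)
    (hinf : ∀ z ∈ Q, ‖x - z‖ ≤ M₁ * hn → p₀x ≤ p z)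
    (cnx dnx : ℝ)
    (hcnx : cnx = αn * ∫ z, K (hn⁻¹ • (x - z)) * p z)
    (hdnx : dnx = n * cnx) :
    1 / dnx ≤ 2 / (c₀ * vd * M₁ ^ d * n * αn * hn ^ d * p₀x) :=
  stmt_16_general n K hKm hK01 M₁ hM₁ hK1 αn hn hα hh p hp0 hp1 Q hQ r₀ c₀ hc₀ hQmr vd hvd hhr x hx
    p₀x hp₀x hinf cnx dnx hcnx hdnx
end
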